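/- arXiv:1602.06411 — 7 statements merged into one kernel-verified Lean document; each statement's English description precedes it below -/
import Mathlib

section
/- For any even integer n ≥ 2, the edge set of the complete graph K_n on n vertices can be partitioned into n/2 Hamiltonian paths (i.e., there exist n/2 pairwise edge-disjoint paths, each visiting every vertex of K_n exactly once, whose edge sets together cover all edges of K_n). -/
/-!
Label the vertices by `ZMod n` with `n = 2m`. The zigzag `0, 1, -1, 2, -2, …, m` runs through every
residue exactly once, and the sums of its consecutive entries alternate `1, 0, 1, 0, …`. Hence an
edge `{a, b}` of its translate by `i` has `a + b ∈ {2i, 2i + 1}`, so the translates by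
`i = 0, …, m - 1` are pairwise edge-disjoint Hamiltonian paths. Having `m (n - 1) = n (n - 1) / 2`
edges in total, they cover `K_n`.
-/

open Finset

namespace SimpleGraph

namespace Walk

variable {V : Type*} {G : SimpleGraph V}

def ofSeq (f : ℕ → V) : ∀ L : ℕ, (∀ j < L, G.Adj (f j) (f (j + 1))) → G.Walk (f 0) (f L)
  | 0, _ => .nil
  | L + 1, h => (ofSeq f L fun j hj => h j (by omega)).concat (h L (by omega))

variable (f : ℕ → V) (L : ℕ) (h : ∀ j < L, G.Adj (f j) (f (j + 1)))

theorem support_ofSeq : (ofSeq f L h).support = (List.range (L + 1)).map f := by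
  induction L with
  | zero => rfl
  | succ L ih => simp [ofSeq, support_concat, ih, List.range_succ (n := L + 1)]

theorem edges_ofSeq : (ofSeq f L h).edges = (List.range L).map fun j => s(f j, f (j + 1)) := by
  induction L with
  | zero => rfl
  | succ L ih => simp [ofSeq, edges_concat, ih, List.range_succ (n := L)]

theorem length_ofSeq : (ofSeq f L h).length = L := by
  simpa using congrArg List.length (support_ofSeq f L h)

theorem isHamiltonian_ofSeq [Fintype V] [DecidableEq V] (hinj : Set.InjOn f (Set.Iio (L + 1)))
    (hcard : Fintype.card V = L + 1) : (ofSeq f L h).IsHamiltonian := by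
  rw [isHamiltonian_iff_isPath_and_length_eq, length_ofSeq, hcard, Nat.add_sub_cancel]
  refine ⟨IsPath.mk' ?_, rfl⟩
  rw [support_ofSeq]
  exact List.nodup_range.map_on fun a ha b hb => hinj (by simpa using ha) (by simpa using hb)

end Walk

theorem mem_edgeSet_iff_exists_mem_edges_of_card_le {V ι : Type*} [Fintype V] [DecidableEq V]
    [Fintype ι] {G : SimpleGraph V} [DecidableRel G.Adj] {u v : ι → V}
    (p : ∀ i, G.Walk (u i) (v i)) (htrail : ∀ i, (p i).IsTrail)
    (hdisj : ∀ i j, i ≠ j → ∀ e ∈ (p i).edges, e ∉ (p j).edges)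
    (hcard : #G.edgeFinset ≤ ∑ i, (p i).length) (e : Sym2 V) :
    e ∈ G.edgeSet ↔ ∃ i, e ∈ (p i).edges := by
  set S := univ.biUnion fun i => (p i).edges.toFinset
  have hS : S ⊆ G.edgeFinset := by
    intro e he
    obtain ⟨i, -, hei⟩ := mem_biUnion.mp he
    exact mem_edgeFinset.mpr ((p i).edges_subset_edgeSet (List.mem_toFinset.mp hei))
  have hScard : #S = ∑ i, (p i).length := by
    rw [card_biUnion]
    · simp [List.toFinset_card_of_nodup (htrail _).edges_nodup]
    · intro i _ j _ hij
      exact Finset.disjoint_left.mpr fun e hei hej =>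
        hdisj i j hij e (List.mem_toFinset.mp hei) (List.mem_toFinset.mp hej)
  rw [← mem_edgeFinset, ← eq_of_subset_of_card_le hS (hScard ▸ hcard)]
  simp [S]

end SimpleGraph

open SimpleGraph

theorem ZMod.intCast_injOn_Ico (n : ℕ) (c : ℤ) :
    Set.InjOn (Int.cast : ℤ → ZMod n) (Set.Ico c (c + n)) := by
  intro a ha b hb hab
  rw [ZMod.intCast_eq_intCast_iff_dvd_sub] at hab
  have := Int.eq_zero_of_abs_lt_dvd hab (abs_sub_lt_iff.mpr ⟨by linarith [ha.1, hb.2], by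
    linarith [ha.2, hb.1]⟩)
  omega

def zigzag (j : ℕ) : ℤ := if Even j then -((j : ℤ) / 2) else ((j : ℤ) + 1) / 2

theorem zigzag_injective : Function.Injective zigzag := by
  intro a b h
  simp only [zigzag, Nat.even_iff] at h
  split_ifs at h <;> omega

theorem zigzag_mem_Ioc {m j : ℕ} (hj : j < 2 * m) : zigzag j ∈ Set.Ioc (-(m : ℤ)) m := by
  simp only [zigzag, Nat.even_iff, Set.mem_Ioc]
  split_ifs <;> omega

theorem zigzag_add_zigzag_succ_mem_Icc (j : ℕ) : zigzag j + zigzag (j + 1) ∈ Set.Icc 0 1 := by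
  simp only [zigzag, Nat.even_iff, Set.mem_Icc]
  split_ifs <;> omega

theorem zigzag_cast_injOn {n : ℕ} (hn : Even n) :
    Set.InjOn (fun j => (zigzag j : ZMod n)) (Set.Iio n) := by
  obtain ⟨m, rfl⟩ := hn
  intro a ha b hb hab
  have hI {j : ℕ} (hj : j < m + m) :
      zigzag j ∈ Set.Ico (-(m : ℤ) + 1) (-(m : ℤ) + 1 + (m + m : ℕ)) := by
    have := zigzag_mem_Ioc (m := m) (j := j) (by omega)
    grind
  exact zigzag_injective (ZMod.intCast_injOn_Ico _ _ (hI ha) (hI hb) hab)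

theorem exists_add_eq_of_mem_edges_ofSeq_zigzag {n i L : ℕ} {G : SimpleGraph (ZMod n)}
    (h : ∀ j < L, G.Adj (i + zigzag j) (i + zigzag (j + 1))) {e : Sym2 (ZMod n)}
    (he : e ∈ (Walk.ofSeq (fun j => (i + zigzag j : ZMod n)) L h).edges) :
    ∃ c ∈ Set.Icc (0 : ℤ) 1, e.add = ((2 * i + c : ℤ) : ZMod n) := by
  rw [Walk.edges_ofSeq] at he
  obtain ⟨j, -, rfl⟩ := List.mem_map.mp he
  refine ⟨_, zigzag_add_zigzag_succ_mem_Icc j, ?_⟩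
  push_cast [Sym2.add_mk]
  ring

theorem exists_hamiltonian_paths_partition_zmod (n : ℕ) [NeZero n] (hn : Even n) :
    ∃ (u v : Fin (n / 2) → ZMod n)
      (p : ∀ i : Fin (n / 2), (⊤ : SimpleGraph (ZMod n)).Walk (u i) (v i)),
      (∀ i, (p i).IsHamiltonian) ∧
      (∀ i j, i ≠ j → ∀ e, e ∈ (p i).edges → e ∉ (p j).edges) ∧
      (∀ e, e ∈ (⊤ : SimpleGraph (ZMod n)).edgeSet ↔ ∃ i, e ∈ (p i).edges) := by
  have hn1 : n - 1 + 1 = n := Nat.sub_add_cancel NeZero.one_le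
  have hm : 2 * (n / 2) = n := Nat.two_mul_div_two_of_even hn
  let f : ℕ → ℕ → ZMod n := fun i j => i + zigzag j
  have hinj (i : ℕ) : Set.InjOn (f i) (Set.Iio (n - 1 + 1)) := by
    rw [hn1]
    exact fun a ha b hb hab => zigzag_cast_injOn hn ha hb (add_left_cancel hab)
  have hadj (i : ℕ) : ∀ j < n - 1, (⊤ : SimpleGraph (ZMod n)).Adj (f i j) (f i (j + 1)) :=
    fun j hj => (top_adj _ _).mpr fun hij => by
      have := hinj i (by simp; omega) (by simp; omega) hij
      omega
  let p (i : Fin (n / 2)) := Walk.ofSeq (f i) (n - 1) (hadj i)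
  have hham (i : Fin (n / 2)) : (p i).IsHamiltonian :=
    Walk.isHamiltonian_ofSeq _ _ _ (hinj i) (by rw [ZMod.card, hn1])
  have hdisj : ∀ i j, i ≠ j → ∀ e ∈ (p i).edges, e ∉ (p j).edges := by
    intro i i' hii' e hi hi'
    obtain ⟨c, hc, hce⟩ := exists_add_eq_of_mem_edges_ofSeq_zigzag _ hi
    obtain ⟨c', hc', hce'⟩ := exists_add_eq_of_mem_edges_ofSeq_zigzag _ hi'
    have := ZMod.intCast_injOn_Ico n 0 (by grind) (by grind) (hce.symm.trans hce')
    exact hii' (Fin.ext (by grind))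
  refine ⟨_, _, p, hham, hdisj, mem_edgeSet_iff_exists_mem_edges_of_card_le p
    (fun i => (hham i).isPath.isTrail) hdisj (le_of_eq ?_)⟩
  calc #(⊤ : SimpleGraph (ZMod n)).edgeFinset = n * (n - 1) / 2 := by
        rw [card_edgeFinset_top_eq_card_choose_two, ZMod.card, Nat.choose_two_right]
    _ = n / 2 * (n - 1) := by
        nth_rw 1 [← hm]
        rw [mul_assoc, Nat.mul_div_cancel_left _ two_pos]
    _ = ∑ i, (p i).length := by simp [p, Walk.length_ofSeq]

theorem stmt_0_general (n : ℕ) (hev : Even n) :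
    ∃ (u v : Fin (n / 2) → Fin n)
      (p : ∀ i : Fin (n / 2), (⊤ : SimpleGraph (Fin n)).Walk (u i) (v i)),
      (∀ i, (p i).IsHamiltonian) ∧
      (∀ i j, i ≠ j → ∀ e, e ∈ (p i).edges → e ∉ (p j).edges) ∧
      (∀ e, e ∈ (⊤ : SimpleGraph (Fin n)).edgeSet ↔ ∃ i, e ∈ (p i).edges) := by
  rcases n with _ | k
  · exact ⟨finZeroElim, finZeroElim, fun i => Fin.elim0 i, finZeroElim, finZeroElim,
      fun e => isEmptyElim e⟩
  -- `ZMod (k + 1)` is `Fin (k + 1)` by definition.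
  · exact exists_hamiltonian_paths_partition_zmod (k + 1) hev

/-- For any even integer `n ≥ 2`, the edge set of the complete graph `K_n`
on `n` vertices can be partitioned into `n/2` Hamiltonian paths: there exist `n/2` walks in
`K_n`, each a Hamiltonian path (visiting every vertex exactly once), which are pairwise
edge-disjoint and whose edge sets together cover all edges of `K_n`. -/
theorem stmt_0 (n : ℕ) (hn : 2 ≤ n) (hev : Even n) :
    ∃ (u v : Fin (n / 2) → Fin n)
      (p : ∀ i : Fin (n / 2), (⊤ : SimpleGraph (Fin n)).Walk (u i) (v i)),
      (∀ i, (p i).IsHamiltonian) ∧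
      (∀ i j, i ≠ j → ∀ e, e ∈ (p i).edges → e ∉ (p j).edges) ∧
      (∀ e, e ∈ (⊤ : SimpleGraph (Fin n)).edgeSet ↔ ∃ i, e ∈ (p i).edges) :=
  stmt_0_general n hev
end

section
/- Let n ≥ 2 and let 𝒢 be the simple temporal graph whose underlying graph is the complete graph K_n and in which every edge carries the single time label 1. Then 𝒢 is strictly temporally connected, and for every edge e of K_n, the temporal graph obtained from 𝒢 by deleting e is not strictly temporally connected. In particular, there are temporal graphs on n vertices whose smallest strict temporal connectivity certificate has n(n−1)/2 = Ω(n²) edges. -/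
/-- Strict temporal reachability: `SReach A u t v` holds iff there is a strict temporal path
(a walk whose temporal edges carry strictly increasing time labels) from `u` to `v` in the
set `A` of temporal edges, all of whose labels are strictly greater than `t`. -/
inductive SReach {V : Type*} (A : Set (Sym2 V × ℕ)) : V → ℕ → V → Prop
  | refl (u : V) (t : ℕ) : SReach A u t u
  | step {u v w : V} {t t' : ℕ} :
      (s(u, v), t') ∈ A → t < t' → SReach A v t' w → SReach A u t w

/-- A set of temporal edges is strictly temporally connected iff every ordered pair of
distinct vertices is joined by a strict temporal path (a first temporal edge followed by a
strict temporal path with strictly larger labels). -/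
def StrictlyTConnected {V : Type*} (A : Set (Sym2 V × ℕ)) : Prop :=
  ∀ u v : V, u ≠ v → ∃ (x : V) (t : ℕ), (s(u, x), t) ∈ A ∧ SReach A x t v

/-! With a single time label `τ` a strict temporal path has at most one edge, so strict
temporal connectivity forces every pair of distinct vertices to be joined directly. -/

section SingleLabel

variable {V : Type*} {A : Set (Sym2 V × ℕ)} {τ : ℕ}

theorem SReach.eq_of_forall_label_eq (hA : ∀ q ∈ A, q.2 = τ) {x v : V}
    (h : SReach A x τ v) : x = v := by
  cases h with
  | refl => rfl
  | step hmem hlt _ => exact absurd (hA _ hmem) hlt.ne'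

theorem StrictlyTConnected.mk_mem_of_forall_label_eq (hc : StrictlyTConnected A)
    (hA : ∀ q ∈ A, q.2 = τ) {u v : V} (huv : u ≠ v) : (s(u, v), τ) ∈ A := by
  obtain ⟨x, t, hmem, hreach⟩ := hc u v huv
  obtain rfl : t = τ := hA _ hmem
  rwa [← hreach.eq_of_forall_label_eq hA]

theorem strictlyTConnected_top_labelled (τ : ℕ) :
    StrictlyTConnected {q : Sym2 V × ℕ | q.1 ∈ (⊤ : SimpleGraph V).edgeSet ∧ q.2 = τ} :=
  fun _ v huv => ⟨v, τ, ⟨by simpa using huv, rfl⟩, .refl v τ⟩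

theorem StrictlyTConnected.eq_top_labelled_of_subset {B : Set (Sym2 V × ℕ)}
    (hB : B ⊆ {q : Sym2 V × ℕ | q.1 ∈ (⊤ : SimpleGraph V).edgeSet ∧ q.2 = τ})
    (hc : StrictlyTConnected B) :
    B = {q : Sym2 V × ℕ | q.1 ∈ (⊤ : SimpleGraph V).edgeSet ∧ q.2 = τ} := by
  refine hB.antisymm ?_
  rintro ⟨e, t⟩ ⟨he, rfl⟩
  induction e using Sym2.inductionOn with
  | hf u v => exact hc.mk_mem_of_forall_label_eq (fun q hq => (hB hq).2) (by simpa using he)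

end SingleLabel

theorem stmt_4_general (n : ℕ) :
    StrictlyTConnected {q : Sym2 (Fin n) × ℕ |
        q.1 ∈ (⊤ : SimpleGraph (Fin n)).edgeSet ∧ q.2 = 1} ∧
    (∀ e ∈ (⊤ : SimpleGraph (Fin n)).edgeSet,
      ¬ StrictlyTConnected ({q : Sym2 (Fin n) × ℕ |
          q.1 ∈ (⊤ : SimpleGraph (Fin n)).edgeSet ∧ q.2 = 1} \ {(e, 1)})) ∧
    (∀ B ⊆ {q : Sym2 (Fin n) × ℕ | q.1 ∈ (⊤ : SimpleGraph (Fin n)).edgeSet ∧ q.2 = 1},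
      StrictlyTConnected B →
        B = {q : Sym2 (Fin n) × ℕ | q.1 ∈ (⊤ : SimpleGraph (Fin n)).edgeSet ∧ q.2 = 1}) ∧
    (⊤ : SimpleGraph (Fin n)).edgeFinset.card = n * (n - 1) / 2 := by
  refine ⟨strictlyTConnected_top_labelled 1, fun e he hc => ?_,
    fun B hB hc => hc.eq_top_labelled_of_subset hB, ?_⟩
  · have hmem : (e, 1) ∈ {q : Sym2 (Fin n) × ℕ |
        q.1 ∈ (⊤ : SimpleGraph (Fin n)).edgeSet ∧ q.2 = 1} := ⟨he, rfl⟩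
    rw [← hc.eq_top_labelled_of_subset Set.sdiff_subset] at hmem
    exact hmem.2 rfl
  · rw [SimpleGraph.card_edgeFinset_top_eq_card_choose_two, Fintype.card_fin,
      Nat.choose_two_right]

/-- For `n ≥ 2`, the simple temporal graph whose underlying graph is `K_n`
and in which every edge carries the single time label `1` is strictly temporally connected,
deleting any single edge destroys strict temporal connectivity, and hence its only strict
temporal connectivity certificate is the whole graph, which has `n(n-1)/2` edges. -/
theorem stmt_4 (n : ℕ) (hn : 2 ≤ n) :
    StrictlyTConnected {q : Sym2 (Fin n) × ℕ |
        q.1 ∈ (⊤ : SimpleGraph (Fin n)).edgeSet ∧ q.2 = 1} ∧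
    (∀ e ∈ (⊤ : SimpleGraph (Fin n)).edgeSet,
      ¬ StrictlyTConnected ({q : Sym2 (Fin n) × ℕ |
          q.1 ∈ (⊤ : SimpleGraph (Fin n)).edgeSet ∧ q.2 = 1} \ {(e, 1)})) ∧
    (∀ B ⊆ {q : Sym2 (Fin n) × ℕ | q.1 ∈ (⊤ : SimpleGraph (Fin n)).edgeSet ∧ q.2 = 1},
      StrictlyTConnected B →
        B = {q : Sym2 (Fin n) × ℕ | q.1 ∈ (⊤ : SimpleGraph (Fin n)).edgeSet ∧ q.2 = 1}) ∧
    (⊤ : SimpleGraph (Fin n)).edgeFinset.card = n * (n - 1) / 2 :=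
  stmt_4_general n
end

section
/- Let 𝒢 be a temporal graph on n vertices with nonnegative weights w(e,t) on its temporal edges, let r be a vertex, and let T' be any spanning subgraph of 𝒢 that is temporally r-connected. Then there exists a spanning subgraph T of 𝒢 such that: (i) T is temporally r-connected; (ii) T uses at most one time label on each edge (i.e., T is a simple temporal graph); (iii) the set of edges of the underlying graph used by T forms a tree (so T has at most n−1 temporal edges); and (iv) the total weight of T is at most the total weight of T'. -/
/-- Temporal reachability: `TReach A u t v` holds iff there is a temporal path (a walk whose
temporal edges carry non-decreasing time labels) from `u` to `v` in the set `A` of temporal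
edges, all of whose labels are at least `t`. -/
inductive TReach {V : Type*} (A : Set (Sym2 V × ℕ)) : V → ℕ → V → Prop
  | refl (u : V) (t : ℕ) : TReach A u t u
  | step {u v w : V} {t t' : ℕ} :
      (s(u, v), t') ∈ A → t ≤ t' → TReach A v t' w → TReach A u t w

/-!
For each vertex `v ≠ r` take a temporal path from `r` that arrives as early as possible and,
among those, has the fewest edges, and keep only its last edge `{u, v}`. The vertex `u` is
reached no later than `v`, and if equally early then by fewer edges, so this parent map strictly
decreases the pair (arrival time, number of edges) in the lexicographic order. Hence the `n - 1`
kept edges are distinct and form a tree, and by induction along the order each vertex is reached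
in the tree by its earliest arrival time, which is at most the label of the edge to each child.
The tree is a subgraph of `T'`, so it weighs no more.
-/
open SimpleGraph

section ParentTree

variable {V α : Type*} [Preorder α] {r : V} {p : V → V} {φ : V → α}

theorem parent_induction [WellFoundedLT α] (hp : ∀ v ≠ r, φ (p v) < φ v) {P : V → Prop}
    (hr : P r) (hstep : ∀ v ≠ r, P (p v) → P v) (v : V) : P v := by
  induction v using (InvImage.wf φ wellFounded_lt).induction with
  | _ v ih =>
    by_cases hv : v = r
    · exact hv ▸ hr
    · exact hstep v hv (ih (p v) (hp v hv))

theorem parent_ne (hp : ∀ v ≠ r, φ (p v) < φ v) {v : V} (hv : v ≠ r) : p v ≠ v :=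
  fun h => (hp v hv).ne (congrArg φ h)

theorem parent_edge_injOn (hp : ∀ v ≠ r, φ (p v) < φ v) :
    Set.InjOn (fun v => s(p v, v)) {r}ᶜ := by
  intro u hu v hv h
  rcases Sym2.eq_iff.mp h with ⟨-, huv⟩ | ⟨hpu, hpv⟩
  · exact huv
  · exact absurd (hpv ▸ hp v hv) (hpu ▸ hp u hu).not_gt

theorem isTree_fromEdgeSet_parent [Finite V] [WellFoundedLT α]
    (hp : ∀ v ≠ r, φ (p v) < φ v) :
    (fromEdgeSet ((fun v => s(p v, v)) '' {r}ᶜ)).IsTree := by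
  rw [isTree_iff_connected_and_card]
  constructor
  · have hreach : ∀ v, (fromEdgeSet ((fun v => s(p v, v)) '' {r}ᶜ)).Reachable r v :=
      parent_induction hp (.refl r) fun v hv hpv =>
        hpv.trans (Adj.reachable ((fromEdgeSet_adj _).mpr ⟨⟨v, hv, rfl⟩, parent_ne hp hv⟩))
    exact (connected_iff _).mpr ⟨fun u v => (hreach u).symm.trans (hreach v), ⟨r⟩⟩
  · have hdiag : Disjoint ((fun v => s(p v, v)) '' {r}ᶜ) Sym2.diagSet := by
      rw [Set.disjoint_left]
      rintro _ ⟨v, hv, rfl⟩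
      exact Sym2.mk_isDiag_iff.not.mpr (parent_ne hp hv)
    rw [edgeSet_fromEdgeSet, hdiag.sdiff_eq_left, Nat.card_coe_set_eq,
      (parent_edge_injOn hp).ncard_image, Set.ncard_compl, Set.ncard_singleton]
    have : Nonempty V := ⟨r⟩
    exact Nat.sub_add_cancel Nat.card_pos

end ParentTree

theorem TReach.of_start_le {V : Type*} {A : Set (Sym2 V × ℕ)} {u v : V} {t t' : ℕ}
    (h : TReach A u t' v) (ht : t ≤ t') : TReach A u t v := by
  cases h with
  | refl => exact .refl u t
  | step he ht' h => exact .step he (ht.trans ht') h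

/-- `TReachWithin A r v b k`: some temporal path from `r` to `v` in `A` has at most `k` edges,
all labelled at most `b`; unlike `TReach`, paths are extended at their last edge. -/
inductive TReachWithin {V : Type*} (A : Set (Sym2 V × ℕ)) (r : V) : V → ℕ → ℕ → Prop
  | root (b k : ℕ) : TReachWithin A r r b k
  | snoc {u v : V} {t b k : ℕ} :
      TReachWithin A r u t k → (s(u, v), t) ∈ A → t ≤ b → TReachWithin A r v b (k + 1)

namespace TReachWithin

variable {V : Type*} {A : Set (Sym2 V × ℕ)} {r u v w : V} {b k : ℕ}

theorem mono (h : TReachWithin A r v b k) {b' : ℕ} (hb : b ≤ b') : TReachWithin A r v b' k := by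
  cases h with
  | root => exact .root b' k
  | snoc hu he ht => exact .snoc hu he (ht.trans hb)

theorem _root_.TReach.exists_treachWithin (h : TReach A u b w) (hu : TReachWithin A r u b k) :
    ∃ b' k', TReachWithin A r w b' k' := by
  induction h generalizing k with
  | refl => exact ⟨_, _, hu⟩
  | step he ht _ ih => exact ih ((hu.mono ht).snoc he le_rfl)

theorem treach_trans (h : TReachWithin A r v b k) {t : ℕ} (hb : b ≤ t) (hvw : TReach A v t w) :
    TReach A r 0 w := by
  induction h generalizing t w with
  | root => exact hvw.of_start_le (Nat.zero_le t)
  | snoc _ he htb ih => exact ih le_rfl (.step he le_rfl (hvw.of_start_le (htb.trans hb)))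

theorem treach (h : TReachWithin A r v b k) : TReach A r 0 v :=
  h.treach_trans le_rfl (.refl v b)

end TReachWithin

section Foremost

variable {V : Type*} (A : Set (Sym2 V × ℕ)) (r : V)

noncomputable def foremostTime (v : V) : ℕ :=
  sInf {b | ∃ k, TReachWithin A r v b k}

noncomputable def foremostHops (v : V) : ℕ :=
  sInf {k | TReachWithin A r v (foremostTime A r v) k}

noncomputable def foremostRank (v : V) : ℕ ×ₗ ℕ :=
  toLex (foremostTime A r v, foremostHops A r v)

variable {A r}

theorem TReachWithin.foremost {v : V} {b k : ℕ} (h : TReachWithin A r v b k) :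
    TReachWithin A r v (foremostTime A r v) (foremostHops A r v) :=
  Nat.sInf_mem (Nat.sInf_mem (s := {b | ∃ k, TReachWithin A r v b k}) ⟨b, k, h⟩)

theorem exists_parent_edge {v : V} (h : ∃ b k, TReachWithin A r v b k) (hv : v ≠ r) :
    ∃ u t, (s(u, v), t) ∈ A ∧ foremostTime A r u ≤ t ∧ t ≤ foremostTime A r v ∧
      foremostRank A r u < foremostRank A r v := by
  obtain ⟨b, k, h⟩ := h
  have hf := h.foremost
  generalize hb : foremostTime A r v = b', hk : foremostHops A r v = k' at hf
  cases hf with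
  | root => exact absurd rfl hv
  | @snoc u _ t _ k hu he htb =>
    have hut : foremostTime A r u ≤ t := Nat.sInf_le ⟨k, hu⟩
    refine ⟨u, t, he, hut, hb ▸ htb, Prod.Lex.toLex_lt_toLex'.mpr ⟨?_, fun heq => ?_⟩⟩
    · omega
    · have hk' : foremostHops A r u ≤ k := Nat.sInf_le (hu.mono (by omega))
      omega

end Foremost

theorem exists_simple_temporal_spanning_tree {V : Type*} [Fintype V] (r : V)
    (A : Finset (Sym2 V × ℕ)) (hconn : ∀ v : V, TReach (↑A : Set (Sym2 V × ℕ)) r 0 v) :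
    ∃ T ⊆ A,
      (∀ v : V, TReach (↑T : Set (Sym2 V × ℕ)) r 0 v) ∧
      (∀ (e : Sym2 V) (t t' : ℕ), (e, t) ∈ T → (e, t') ∈ T → t = t') ∧
      (fromEdgeSet {e : Sym2 V | ∃ t : ℕ, (e, t) ∈ T}).IsTree ∧
      T.card ≤ Fintype.card V - 1 := by
  classical
  have hreach (v : V) : ∃ b k, TReachWithin (↑A : Set (Sym2 V × ℕ)) r v b k :=
    (hconn v).exists_treachWithin (.root 0 0)
  choose! p τ hpA hpτ hτ hrank using fun v (hv : v ≠ r) => exists_parent_edge (hreach v) hv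
  set T := (Finset.univ.erase r).image fun v => (s(p v, v), τ v)
  have hmemT {v : V} (hv : v ≠ r) : (s(p v, v), τ v) ∈ T :=
    Finset.mem_image_of_mem _ (Finset.mem_erase.mpr ⟨hv, Finset.mem_univ v⟩)
  have hedges : {e : Sym2 V | ∃ t : ℕ, (e, t) ∈ T} = (fun v => s(p v, v)) '' {r}ᶜ := by
    ext e
    simp [T, and_comm]
  have hreachT (v : V) :
      ∃ k, TReachWithin (↑T : Set (Sym2 V × ℕ)) r v (foremostTime (↑A) r v) k := by
    induction v using parent_induction hrank with
    | hr => exact ⟨0, .root _ 0⟩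
    | hstep v hv ih =>
      obtain ⟨k, hk⟩ := ih
      exact ⟨k + 1, (hk.mono (hpτ v hv)).snoc (hmemT hv) (hτ v hv)⟩
  refine ⟨T, ?_, fun v => (hreachT v).choose_spec.treach, ?_,
    hedges ▸ isTree_fromEdgeSet_parent hrank, ?_⟩
  · simpa [T, Finset.image_subset_iff] using hpA
  · simp only [T, Finset.mem_image, Finset.mem_erase, Prod.mk.injEq]
    rintro e t t' ⟨u, ⟨hu, -⟩, rfl, rfl⟩ ⟨v, ⟨hv, -⟩, huv, rfl⟩
    rw [parent_edge_injOn hrank hv hu huv]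
  · calc T.card ≤ (Finset.univ.erase r).card := Finset.card_image_le
      _ = Fintype.card V - 1 := by
        rw [Finset.card_erase_of_mem (Finset.mem_univ r), Finset.card_univ]

theorem stmt_5_general {V : Type*} [Fintype V]
    (A : Finset (Sym2 V × ℕ))
    (w : Sym2 V × ℕ → ℝ) (hw : ∀ q ∈ A, 0 ≤ w q)
    (r : V)
    (T' : Finset (Sym2 V × ℕ)) (hT'A : T' ⊆ A)
    (hT'conn : ∀ v : V, TReach (↑T' : Set (Sym2 V × ℕ)) r 0 v) :
    ∃ T ⊆ A,
      (∀ v : V, TReach (↑T : Set (Sym2 V × ℕ)) r 0 v) ∧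
      (∀ (e : Sym2 V) (t t' : ℕ), (e, t) ∈ T → (e, t') ∈ T → t = t') ∧
      (SimpleGraph.fromEdgeSet {e : Sym2 V | ∃ t : ℕ, (e, t) ∈ T}).IsTree ∧
      T.card ≤ Fintype.card V - 1 ∧
      ∑ q ∈ T, w q ≤ ∑ q ∈ T', w q := by
  obtain ⟨T, hTT', hconn, hsimple, htree, hcard⟩ :=
    exists_simple_temporal_spanning_tree r T' hT'conn
  exact ⟨T, hTT'.trans hT'A, hconn, hsimple, htree, hcard,
    Finset.sum_le_sum_of_subset_of_nonneg hTT' fun q hq _ => hw q (hT'A hq)⟩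

/-- Let `𝒢` be a temporal graph on a finite vertex set (temporal edge set
`A`, loopless, with nonnegative weights `w`), `r` a vertex, and `T'` a temporally
`r`-connected spanning subgraph of `𝒢`.  Then there is a spanning subgraph `T` of `𝒢` that:
(i) is temporally `r`-connected; (ii) uses at most one time label per underlying edge (is a
simple temporal graph); (iii) has underlying edge set forming a tree, and hence has at most
`n - 1` temporal edges; and (iv) has total weight at most that of `T'`. -/
theorem stmt_5 {V : Type*} [Fintype V] [DecidableEq V]
    (A : Finset (Sym2 V × ℕ)) (hA : ∀ q ∈ A, ¬ q.1.IsDiag)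
    (w : Sym2 V × ℕ → ℝ) (hw : ∀ q ∈ A, 0 ≤ w q)
    (r : V)
    (T' : Finset (Sym2 V × ℕ)) (hT'A : T' ⊆ A)
    (hT'conn : ∀ v : V, TReach (↑T' : Set (Sym2 V × ℕ)) r 0 v) :
    ∃ T ⊆ A,
      (∀ v : V, TReach (↑T : Set (Sym2 V × ℕ)) r 0 v) ∧
      (∀ (e : Sym2 V) (t t' : ℕ), (e, t) ∈ T → (e, t') ∈ T → t = t') ∧
      (SimpleGraph.fromEdgeSet {e : Sym2 V | ∃ t : ℕ, (e, t) ∈ T}).IsTree ∧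
      T.card ≤ Fintype.card V - 1 ∧
      ∑ q ∈ T, w q ≤ ∑ q ∈ T', w q :=
  stmt_5_general A w hw r T' hT'A hT'conn
end

section
/- Let 𝒢 be a temporally connected temporal graph with nonnegative weights whose underlying graph is a tree. Then there exists a minimum-weight temporally connected spanning subgraph of 𝒢 that uses at most two time labels on each edge of the underlying tree. -/
/-- A set of temporal edges is temporally connected iff every ordered pair of vertices is
joined by a temporal path. -/
def TConnected {V : Type*} (A : Set (Sym2 V × ℕ)) : Prop :=
  ∀ u v : V, TReach A u 0 v

/-!
Orient every tree edge `uv` both ways. For `u → v`, call a label `t` of `uv` good if, leaving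
`v` at time `t`, one can still reach every vertex on `v`'s side of `uv`, and keep only the
largest good label. A temporal path between the two sides must cross `uv`, so good labels
exist; and the kept label of `u → v` is at most that of `v → w` for `u ≠ w`, so along every
tree path the kept labels are non-decreasing and the pruned graph is temporally connected.
It has at most two labels per edge, so a minimum-weight temporally connected subgraph may be
replaced by its pruning, which weighs no more since weights are nonnegative.
-/

namespace SimpleGraph

variable {V : Type*} {G : SimpleGraph V} {u v w a b y : V}

def side (G : SimpleGraph V) (u v : V) : Set V :=
  {y | (G.deleteEdges {s(u, v)}).Reachable v y}

lemma mem_side : y ∈ G.side u v ↔ (G.deleteEdges {s(u, v)}).Reachable v y := Iff.rfl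

lemma self_mem_side : v ∈ G.side u v := Reachable.refl _

lemma IsAcyclic.notMem_side (hG : G.IsAcyclic) (huv : G.Adj u v) : u ∉ G.side u v :=
  fun h => isAcyclic_iff_forall_adj_isBridge.mp hG huv h.symm

lemma IsAcyclic.mem_side_or_of_adj (hG : G.IsAcyclic) (huv : G.Adj u v) (ha : a ∈ G.side v u)
    (hab : G.Adj a b) : b ∈ G.side v u ∨ a = u ∧ b = v := by
  by_cases he : s(a, b) = s(u, v)
  · rcases Sym2.eq_iff.1 he with ⟨rfl, rfl⟩ | ⟨rfl, rfl⟩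
    · exact Or.inr ⟨rfl, rfl⟩
    · exact absurd ha (hG.notMem_side huv.symm)
  · have hab' : (G.deleteEdges {s(v, u)}).Adj a b :=
      deleteEdges_adj.2 ⟨hab, by simpa [Sym2.eq_swap] using he⟩
    exact Or.inl (Reachable.trans ha hab'.reachable)

lemma IsAcyclic.side_subset_side (hG : G.IsAcyclic) (huv : G.Adj u v) (hvw : G.Adj v w)
    (huw : u ≠ w) : G.side v w ⊆ G.side u v := by
  classical
  intro z hz
  obtain ⟨p, hp⟩ := reachable_deleteEdges_iff_exists_walk.1 hz
  have huv_notMem : s(u, v) ∉ p.edges := fun h =>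
    hG.notMem_side hvw <| reachable_deleteEdges_iff_exists_walk.2
      ⟨p.takeUntil v (p.snd_mem_support_of_mem_edges h),
        fun h' => hp (p.edges_takeUntil_subset_edges _ h')⟩
  have hvw' : (G.deleteEdges {s(u, v)}).Adj v w :=
    deleteEdges_adj.2 ⟨hvw, by simp [huv.ne', Ne.symm huw]⟩
  exact hvw'.reachable.trans (reachable_deleteEdges_iff_exists_walk.2 ⟨p, huv_notMem⟩)

end SimpleGraph

open SimpleGraph

namespace TReach

variable {V : Type*}

lemma of_le {A : Set (Sym2 V × ℕ)} {u v : V} {t t' : ℕ} (hle : t ≤ t')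
    (h : TReach A u t' v) : TReach A u t v := by
  cases h with
  | refl => exact .refl _ _
  | step hmem hle' hr => exact .step hmem (hle.trans hle') hr

lemma exists_cross {G : SimpleGraph V} {C : Set (Sym2 V × ℕ)} (hG : G.IsAcyclic)
    (hCG : ∀ q ∈ C, q.1 ∈ G.edgeSet) {u v x y : V} (huv : G.Adj u v) {t : ℕ}
    (h : TReach C x t y) (hx : x ∈ G.side v u) (hy : y ∈ G.side u v) :
    ∃ t', t ≤ t' ∧ (s(u, v), t') ∈ C ∧ TReach C v t' y := by
  induction h with
  | refl =>
    rw [mem_side, Sym2.eq_swap] at hx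
    exact absurd (hy.trans hx.symm) (hG.notMem_side huv)
  | step hmem hle hr ih =>
    rcases hG.mem_side_or_of_adj huv hx (hCG _ hmem) with hb | ⟨rfl, rfl⟩
    · obtain ⟨t', hle', hrest⟩ := ih hb hy
      exact ⟨t', hle.trans hle', hrest⟩
    · exact ⟨_, hle, hmem, hr⟩

end TReach

namespace TemporalTree

variable {V : Type*} {G : SimpleGraph V} {C : Finset (Sym2 V × ℕ)} {u v w : V} {t : ℕ}

def IsGoodLabel (G : SimpleGraph V) (C : Finset (Sym2 V × ℕ)) (u v : V) (t : ℕ) : Prop :=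
  (s(u, v), t) ∈ C ∧ ∀ y ∈ G.side u v, TReach (↑C) v t y

noncomputable def bestLabel (G : SimpleGraph V) (C : Finset (Sym2 V × ℕ)) (u v : V) : ℕ :=
  sSup {t | IsGoodLabel G C u v t}

lemma bddAbove_isGoodLabel : BddAbove {t | IsGoodLabel G C u v t} :=
  ⟨C.sup Prod.snd, fun _ ht => Finset.le_sup (f := Prod.snd) ht.1⟩

lemma IsGoodLabel.le_bestLabel (h : IsGoodLabel G C u v t) : t ≤ bestLabel G C u v :=
  le_csSup bddAbove_isGoodLabel h

lemma isGoodLabel_bestLabel (h : ∃ t, IsGoodLabel G C u v t) :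
    IsGoodLabel G C u v (bestLabel G C u v) :=
  Nat.sSup_mem h bddAbove_isGoodLabel

/-- The earliest label `≥ s` of `uv` serves every target at once. -/
lemma exists_isGoodLabel_ge {s : ℕ}
    (h : ∀ y ∈ G.side u v, ∃ t, s ≤ t ∧ (s(u, v), t) ∈ C ∧ TReach (↑C) v t y) :
    ∃ t, s ≤ t ∧ IsGoodLabel G C u v t := by
  obtain ⟨t₀, hst₀, hmem₀, -⟩ := h v self_mem_side
  have hne : {t | s ≤ t ∧ (s(u, v), t) ∈ C}.Nonempty := ⟨t₀, hst₀, hmem₀⟩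
  obtain ⟨hs, hmem⟩ := Nat.sInf_mem hne
  refine ⟨_, hs, hmem, fun y hy => ?_⟩
  obtain ⟨t, hst, hmem', hreach⟩ := h y hy
  exact hreach.of_le (Nat.sInf_le ⟨hst, hmem'⟩)

open Classical in
noncomputable def prune (G : SimpleGraph V) (C : Finset (Sym2 V × ℕ)) : Finset (Sym2 V × ℕ) :=
  C.filter fun q => ∃ u v, G.Adj u v ∧ q = (s(u, v), bestLabel G C u v)

open Classical in
lemma mem_prune {q : Sym2 V × ℕ} :
    q ∈ prune G C ↔ q ∈ C ∧ ∃ u v, G.Adj u v ∧ q = (s(u, v), bestLabel G C u v) :=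
  Finset.mem_filter

lemma prune_subset : prune G C ⊆ C := fun _ hq => (mem_prune.1 hq).1

lemma card_filter_prune_le_two [DecidableEq V] (e : Sym2 V) :
    ((prune G C).filter (fun q => q.1 = e)).card ≤ 2 := by
  induction e with
  | h u v =>
    refine (Finset.card_le_card fun q hq => ?_).trans (Finset.card_le_two
      (a := (s(u, v), bestLabel G C u v)) (b := (s(u, v), bestLabel G C v u)))
    obtain ⟨hq, he⟩ := Finset.mem_filter.1 hq
    obtain ⟨-, a, b, -, rfl⟩ := mem_prune.1 hq
    rcases Sym2.eq_iff.1 he with ⟨rfl, rfl⟩ | ⟨rfl, rfl⟩ <;> simp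

section Connected

variable (hG : G.IsAcyclic) (hCG : ∀ q ∈ C, q.1 ∈ G.edgeSet)
    (hC : TConnected (↑C : Set (Sym2 V × ℕ)))
include hG hCG hC

lemma exists_isGoodLabel (huv : G.Adj u v) : ∃ t, IsGoodLabel G C u v t := by
  obtain ⟨t, -, ht⟩ := exists_isGoodLabel_ge (s := 0) fun y hy =>
    (hC u y).exists_cross hG hCG huv self_mem_side hy
  exact ⟨t, ht⟩

lemma bestLabel_le_bestLabel (huv : G.Adj u v) (hvw : G.Adj v w) (huw : u ≠ w) :
    bestLabel G C u v ≤ bestLabel G C v w := by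
  have hgood := isGoodLabel_bestLabel (exists_isGoodLabel hG hCG hC huv)
  obtain ⟨t, hle, ht⟩ := exists_isGoodLabel_ge (s := bestLabel G C u v) fun z hz =>
    (hgood.2 z (hG.side_subset_side huv hvw huw hz)).exists_cross hG hCG hvw self_mem_side hz
  exact hle.trans ht.le_bestLabel

lemma mk_bestLabel_mem_prune (huv : G.Adj u v) : (s(u, v), bestLabel G C u v) ∈ prune G C :=
  mem_prune.2 ⟨(isGoodLabel_bestLabel (exists_isGoodLabel hG hCG hC huv)).1, u, v, huv, rfl⟩

lemma treach_prune_of_isPath {x a y : V} (hxa : G.Adj x a) (p : G.Walk a y)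
    (hp : (Walk.cons hxa p).IsPath) : TReach ↑(prune G C) a (bestLabel G C x a) y := by
  induction p generalizing x with
  | nil => exact .refl _ _
  | @cons a b y hab q ih =>
    have hxb : x ≠ b := by
      rintro rfl
      exact ((Walk.cons_isPath_iff _ _).1 hp).2 (by simp)
    exact .step (mk_bestLabel_mem_prune hG hCG hC hab)
      (bestLabel_le_bestLabel hG hCG hC hxa hab hxb) (ih hab hp.of_cons)

end Connected

lemma tconnected_prune (hG : G.IsTree) (hCG : ∀ q ∈ C, q.1 ∈ G.edgeSet)
    (hC : TConnected (↑C : Set (Sym2 V × ℕ))) :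
    TConnected (↑(prune G C) : Set (Sym2 V × ℕ)) := by
  classical
  intro u v
  obtain ⟨p, hp⟩ := (hG.connected.preconnected u v).some.toPath
  cases p with
  | nil => exact .refl _ _
  | cons huv p =>
    exact .step (mk_bestLabel_mem_prune hG.isAcyclic hCG hC huv) (Nat.zero_le _)
      (treach_prune_of_isPath hG.isAcyclic hCG hC huv p hp)

end TemporalTree

lemma Finset.exists_min_sum_of_forall_exists_subset {α M : Type*} [AddCommMonoid M]
    [LinearOrder M] [IsOrderedAddMonoid M] {A : Finset α} {w : α → M} (hw : ∀ q ∈ A, 0 ≤ w q)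
    {P Q : Finset α → Prop} (hA : P A) (hPQ : ∀ C ⊆ A, P C → ∃ B ⊆ C, P B ∧ Q B) :
    ∃ B ⊆ A, P B ∧ (∀ C ⊆ A, P C → ∑ q ∈ B, w q ≤ ∑ q ∈ C, w q) ∧ Q B := by
  classical
  let S := A.powerset.filter fun B => P B ∧ Q B
  have hS : S.Nonempty := by
    obtain ⟨B, hBA, hB⟩ := hPQ A subset_rfl hA
    exact ⟨B, Finset.mem_filter.2 ⟨Finset.mem_powerset.2 hBA, hB⟩⟩
  obtain ⟨B, hBS, hBmin⟩ := S.exists_min_image (fun B => ∑ q ∈ B, w q) hS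
  obtain ⟨hBA, hPB, hQB⟩ := Finset.mem_filter.1 hBS
  refine ⟨B, Finset.mem_powerset.1 hBA, hPB, fun C hCA hC => ?_, hQB⟩
  obtain ⟨B', hB'C, hB'⟩ := hPQ C hCA hC
  calc ∑ q ∈ B, w q ≤ ∑ q ∈ B', w q :=
        hBmin B' (Finset.mem_filter.2 ⟨Finset.mem_powerset.2 (hB'C.trans hCA), hB'⟩)
    _ ≤ ∑ q ∈ C, w q := Finset.sum_le_sum_of_subset_of_nonneg hB'C fun q hq _ => hw q (hCA hq)

theorem stmt_9_general {V : Type*} [DecidableEq V]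
    (A : Finset (Sym2 V × ℕ)) (hA : ∀ q ∈ A, ¬ q.1.IsDiag)
    (w : Sym2 V × ℕ → ℝ) (hw : ∀ q ∈ A, 0 ≤ w q)
    (htree : (SimpleGraph.fromEdgeSet {e : Sym2 V | ∃ t : ℕ, (e, t) ∈ A}).IsTree)
    (hconn : TConnected (↑A : Set (Sym2 V × ℕ))) :
    ∃ B ⊆ A, TConnected (↑B : Set (Sym2 V × ℕ)) ∧
      (∀ C ⊆ A, TConnected (↑C : Set (Sym2 V × ℕ)) → ∑ q ∈ B, w q ≤ ∑ q ∈ C, w q) ∧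
      (∀ e : Sym2 V, (B.filter (fun q => q.1 = e)).card ≤ 2) := by
  have hAG : ∀ q ∈ A, q.1 ∈ (fromEdgeSet {e | ∃ t : ℕ, (e, t) ∈ A}).edgeSet :=
    fun q hq => by
      rw [edgeSet_fromEdgeSet]
      exact ⟨⟨q.2, hq⟩, hA q hq⟩
  refine Finset.exists_min_sum_of_forall_exists_subset hw hconn fun C hCA hC => ?_
  exact ⟨TemporalTree.prune _ C, TemporalTree.prune_subset,
    TemporalTree.tconnected_prune htree (fun q hq => hAG q (hCA hq)) hC,
    TemporalTree.card_filter_prune_le_two⟩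

/-- Let `𝒢` be a temporally connected temporal graph (temporal edge set
`A`, loopless, nonnegative weights `w`) whose underlying graph is a tree.  Then some
minimum-weight temporally connected spanning subgraph `B` of `𝒢` uses at most two time
labels on each edge of the underlying tree. -/
theorem stmt_9 {V : Type*} [Fintype V] [DecidableEq V]
    (A : Finset (Sym2 V × ℕ)) (hA : ∀ q ∈ A, ¬ q.1.IsDiag)
    (w : Sym2 V × ℕ → ℝ) (hw : ∀ q ∈ A, 0 ≤ w q)
    (htree : (SimpleGraph.fromEdgeSet {e : Sym2 V | ∃ t : ℕ, (e, t) ∈ A}).IsTree)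
    (hconn : TConnected (↑A : Set (Sym2 V × ℕ))) :
    ∃ B ⊆ A, TConnected (↑B : Set (Sym2 V × ℕ)) ∧
      (∀ C ⊆ A, TConnected (↑C : Set (Sym2 V × ℕ)) → ∑ q ∈ B, w q ≤ ∑ q ∈ C, w q) ∧
      (∀ e : Sym2 V, (B.filter (fun q => q.1 = e)).card ≤ 2) :=
  stmt_9_general A hA w hw htree hconn
end

section
/- Let 𝒢 be a temporal graph whose underlying graph is the cycle v_0, v_1, …, v_{n−1}, v_0 (indices mod n), and let 𝒢' be a spanning subgraph of 𝒢. Suppose 𝒢' contains a temporal path visiting v_i, v_{i+1}, …, v_j in this order, and that for some k ∈ {i, i+1, …, j}, 𝒢' also contains a temporal path visiting v_k, v_{k−1}, …, v_{j+2}, v_{j+1} in this order. Then for every p ∈ {i, i+1, …, k}, 𝒢' contains a temporal path from v_p to every other vertex of the cycle. -/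
/-- `FwdPath A i len t` says that `A` contains a temporal path that visits the cycle vertices
`v_i, v_{i+1}, …, v_{i+len}` in this (forward) order, the `k`-th edge being available at time
`t k`, with non-decreasing labels. -/
def FwdPath {n : ℕ} (A : Set (Sym2 (ZMod n) × ℕ)) (i : ZMod n) (len : ℕ) (t : ℕ → ℕ) : Prop :=
  (∀ k : ℕ, k + 1 < len → t k ≤ t (k + 1)) ∧
  (∀ k : ℕ, k < len → (s(i + (k : ZMod n), i + (k : ZMod n) + 1), t k) ∈ A)

/-- `BwdPath A j len t` says that `A` contains a temporal path that visits the cycle vertices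
`v_j, v_{j-1}, …, v_{j-len}` in this (backward) order, the `k`-th edge being available at
time `t k`, with non-decreasing labels. -/
def BwdPath {n : ℕ} (A : Set (Sym2 (ZMod n) × ℕ)) (j : ZMod n) (len : ℕ) (t : ℕ → ℕ) : Prop :=
  (∀ k : ℕ, k + 1 < len → t k ≤ t (k + 1)) ∧
  (∀ k : ℕ, k < len → (s(j - (k : ZMod n), j - (k : ZMod n) - 1), t k) ∈ A)

theorem TReach.mono {V : Type*} {A : Set (Sym2 V × ℕ)} {u v : V} {t t' : ℕ}
    (h : TReach A u t v) (hle : t' ≤ t) : TReach A u t' v := by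
  induction h with
  | refl u _ => exact TReach.refl u t'
  | step hmem hlabel hrest _ => exact TReach.step hmem (hle.trans hlabel) hrest

theorem TReach.of_chain {V : Type*} {A : Set (Sym2 V × ℕ)} {f : ℕ → V} {t : ℕ → ℕ} {len : ℕ}
    (hmono : ∀ k, k + 1 < len → t k ≤ t (k + 1))
    (hedge : ∀ k, k < len → (s(f k, f (k + 1)), t k) ∈ A)
    {d e : ℕ} (hde : d ≤ e) (he : e ≤ len) : TReach A (f d) (t d) (f e) := by
  induction hde using Nat.decreasingInduction with
  | self => exact TReach.refl _ _
  | of_succ k hk ih =>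
    refine TReach.step (hedge k (by omega)) le_rfl ?_
    rcases (Nat.succ_le_of_lt hk).eq_or_lt with rfl | _
    · exact TReach.refl _ _
    · exact ih.mono (hmono k (by omega))

theorem FwdPath.treach {n : ℕ} {A : Set (Sym2 (ZMod n) × ℕ)} {i : ZMod n} {len : ℕ}
    {t : ℕ → ℕ} (h : FwdPath A i len t) {d e : ℕ} (hde : d ≤ e) (he : e ≤ len) :
    TReach A (i + d) (t d) (i + e) :=
  TReach.of_chain (f := fun k => i + k) h.1
    (fun k hk => by simpa only [Nat.cast_succ, add_assoc] using h.2 k hk) hde he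

theorem BwdPath.treach {n : ℕ} {A : Set (Sym2 (ZMod n) × ℕ)} {j : ZMod n} {len : ℕ}
    {t : ℕ → ℕ} (h : BwdPath A j len t) {d e : ℕ} (hde : d ≤ e) (he : e ≤ len) :
    TReach A (j - d) (t d) (j - e) :=
  TReach.of_chain (f := fun k => j - k) h.1
    (fun k hk => by simpa only [Nat.cast_succ, sub_sub] using h.2 k hk) hde he

/-- Paper notation: `j = i + a`, `k = i + c`, `p = i + d`; the backward path from `v_k` to
`v_{j+1}` has `c + n - a - 1` edges. -/
theorem stmt_10_general (n : ℕ) (hn : 3 ≤ n)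
    (A' : Set (Sym2 (ZMod n) × ℕ))
    (i : ZMod n) (a c : ℕ) (ha : a ≤ n - 1)
    (tf tb : ℕ → ℕ)
    (hfwd : FwdPath A' i a tf)
    (hbwd : BwdPath A' (i + (c : ZMod n)) (c + n - a - 1) tb) :
    ∀ d : ℕ, d ≤ c → ∀ v : ZMod n, TReach A' (i + (d : ZMod n)) 0 v := by
  have : NeZero n := ⟨by omega⟩
  intro d hd v
  obtain ⟨m, hm, rfl⟩ : ∃ m < n, v = i + m := ⟨(v - i).val, ZMod.val_lt _, by simp⟩
  have hstart : i + (c : ZMod n) - ((c - d : ℕ) : ZMod n) = i + d := by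
    rw [Nat.cast_sub hd]; ring
  rcases lt_or_ge m d with hmd | hdm
  · have hend : i + (c : ZMod n) - ((c - m : ℕ) : ZMod n) = i + m := by
      rw [Nat.cast_sub (by omega)]; ring
    simpa only [hstart, hend] using
      (hbwd.treach (d := c - d) (e := c - m) (by omega) (by omega)).mono (Nat.zero_le _)
  rcases le_or_gt m a with hma | ham
  · exact (hfwd.treach hdm hma).mono (Nat.zero_le _)
  · have hend : i + (c : ZMod n) - ((c + n - m : ℕ) : ZMod n) = i + m := by
      rw [Nat.cast_sub (by omega), Nat.cast_add, ZMod.natCast_self]; ring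
    simpa only [hstart, hend] using
      (hbwd.treach (d := c - d) (e := c + n - m) (by omega) (by omega)).mono (Nat.zero_le _)

/-- Let `𝒢` be a temporal graph whose underlying graph is the cycle
`v_0, …, v_{n-1}, v_0` (vertices `ZMod n`, temporal edge set `A` supported on cycle edges),
and let `A'` (the temporal edge set of a spanning subgraph `𝒢'`) be a subset of `A`.
Suppose `A'` contains a temporal path visiting `v_i, v_{i+1}, …, v_j` in this order (here
`j = i + a` with `a ≤ n - 1`), and that for `k = i + c` with `c ≤ a` it also contains a
temporal path visiting `v_k, v_{k-1}, …, v_{j+2}, v_{j+1}` in this order (a backward path of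
`c + n - a - 1` edges).  Then every vertex `v_p` with `p = i + d`, `d ≤ c`, has a temporal
path in `A'` to every other vertex of the cycle. -/
theorem stmt_10 (n : ℕ) (hn : 3 ≤ n)
    (A : Set (Sym2 (ZMod n) × ℕ))
    (hcyc : ∀ q ∈ A, ∃ i : ZMod n, q.1 = s(i, i + 1))
    (A' : Set (Sym2 (ZMod n) × ℕ)) (hsub : A' ⊆ A)
    (i : ZMod n) (a c : ℕ) (ha : a ≤ n - 1) (hc : c ≤ a)
    (tf tb : ℕ → ℕ)
    (hfwd : FwdPath A' i a tf)
    (hbwd : BwdPath A' (i + (c : ZMod n)) (c + n - a - 1) tb) :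
    ∀ d : ℕ, d ≤ c → ∀ v : ZMod n, TReach A' (i + (d : ZMod n)) 0 v :=
  stmt_10_general n hn A' i a c ha tf tb hfwd hbwd
end

section
/- Let 𝒢 be a temporal graph whose underlying graph is the cycle v_0, …, v_{n−1}, v_0, and let 𝒢' be a temporally connected spanning subgraph of 𝒢. Then the vertex set of 𝒢 can be partitioned into sectors with respect to 𝒢', i.e., into contiguous arcs (v_i, v_{i+1}, …, v_j) such that for each arc there exists a vertex v_k with k ∉ {i, i+1, …, j−1} for which 𝒢' contains a temporal path visiting v_i, v_{i+1}, …, v_k in this order and a temporal path visiting v_j, v_{j−1}, …, v_{k+1} in this order. -/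
/-- `Sector A i len` says that the contiguous arc `(v_i, v_{i+1}, …, v_j)` with `j = i + len`
is a sector with respect to the temporal edge set `A`: there is a vertex `v_k`, `k = i + d`
with `len ≤ d ≤ n - 1` (so `k ∉ {i, …, j-1}`), such that `A` contains an increasing path
`(v_i, v_{i+1}, …, v_k)` and a decreasing path `(v_j, v_{j-1}, …, v_{k+1})`. -/
def Sector {n : ℕ} (A : Set (Sym2 (ZMod n) × ℕ)) (i : ZMod n) (len : ℕ) : Prop :=
  ∃ d : ℕ, len ≤ d ∧ d ≤ n - 1 ∧
    (∃ tf : ℕ → ℕ, FwdPath A i d tf) ∧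
    (∃ tb : ℕ → ℕ, BwdPath A (i + (len : ZMod n)) (len + n - d - 1) tb)

/-
Every single vertex already forms a sector. On a cycle, a temporal walk from `u` can be
straightened: backtracking over an edge only removes it from the walk, so whatever `u` reaches
it reaches along a monotone arc, clockwise or counterclockwise. Let `f` be the largest length
of a clockwise temporal path from `v_i`. If `f < n - 1`, the vertex `v_{i+f+1}` is not reached
clockwise, so it is reached counterclockwise, by an arc of length at least `n - f - 1`; this is
exactly the decreasing path the sector `(v_i)` needs.
-/

variable {n : ℕ} {A : Set (Sym2 (ZMod n) × ℕ)}

namespace FwdPath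

variable {i : ZMod n} {d : ℕ} {t : ℕ → ℕ}

lemma zero : FwdPath A i 0 t :=
  ⟨fun _ hk => absurd hk (by omega), fun _ hk => absurd hk (by omega)⟩

lemma mono (h : FwdPath A i d t) {d' : ℕ} (hd : d' ≤ d) : FwdPath A i d' t :=
  ⟨fun k hk => h.1 k (by omega), fun k hk => h.2 k (by omega)⟩

lemma cons {t' : ℕ} (he : (s(i, i + 1), t') ∈ A) (h : FwdPath A (i + 1) d t)
    (hle : 0 < d → t' ≤ t 0) :
    FwdPath A i (d + 1) (fun k => if k = 0 then t' else t (k - 1)) := by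
  refine ⟨fun k hk => ?_, fun k hk => ?_⟩ <;> rcases k with _ | k
  · simpa using hle (by omega)
  · simpa using h.1 k (by omega)
  · simpa using he
  · convert h.2 k (by omega) using 3 <;> push_cast <;> ring

lemma tail (h : FwdPath A i (d + 1) t) : FwdPath A (i + 1) d (fun k => t (k + 1)) := by
  refine ⟨fun k hk => h.1 (k + 1) (by omega), fun k hk => ?_⟩
  convert h.2 (k + 1) (by omega) using 3 <;> push_cast <;> ring

end FwdPath

namespace BwdPath

variable {j : ZMod n} {d : ℕ} {t : ℕ → ℕ}

lemma zero : BwdPath A j 0 t :=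
  ⟨fun _ hk => absurd hk (by omega), fun _ hk => absurd hk (by omega)⟩

lemma mono (h : BwdPath A j d t) {d' : ℕ} (hd : d' ≤ d) : BwdPath A j d' t :=
  ⟨fun k hk => h.1 k (by omega), fun k hk => h.2 k (by omega)⟩

lemma cons {t' : ℕ} (he : (s(j, j - 1), t') ∈ A) (h : BwdPath A (j - 1) d t)
    (hle : 0 < d → t' ≤ t 0) :
    BwdPath A j (d + 1) (fun k => if k = 0 then t' else t (k - 1)) := by
  refine ⟨fun k hk => ?_, fun k hk => ?_⟩ <;> rcases k with _ | k
  · simpa using hle (by omega)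
  · simpa using h.1 k (by omega)
  · simpa using he
  · convert h.2 k (by omega) using 3 <;> push_cast <;> ring

lemma tail (h : BwdPath A j (d + 1) t) : BwdPath A (j - 1) d (fun k => t (k + 1)) := by
  refine ⟨fun k hk => h.1 (k + 1) (by omega), fun k hk => ?_⟩
  convert h.2 (k + 1) (by omega) using 3 <;> push_cast <;> ring

end BwdPath

/-- `v` is reached from `u`, starting no earlier than time `t`, along a monotone arc of the
cycle, clockwise or counterclockwise. -/
def ArcReach (A : Set (Sym2 (ZMod n) × ℕ)) (u : ZMod n) (t : ℕ) (v : ZMod n) : Prop :=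
  ∃ (d : ℕ) (tl : ℕ → ℕ), (0 < d → t ≤ tl 0) ∧
    ((v = u + d ∧ FwdPath A u d tl) ∨ (v = u - d ∧ BwdPath A u d tl))

namespace ArcReach

lemma refl (u : ZMod n) (t : ℕ) : ArcReach A u t u :=
  ⟨0, fun _ => 0, fun h => absurd h (lt_irrefl 0), Or.inl ⟨by simp, FwdPath.zero⟩⟩

lemma cons_fwd {u w : ZMod n} {t t' : ℕ} (he : (s(u, u + 1), t') ∈ A) (htt' : t ≤ t')
    (h : ArcReach A (u + 1) t' w) : ArcReach A u t w := by
  obtain ⟨d, tl, htl, ⟨rfl, hp⟩ | ⟨rfl, hp⟩⟩ := h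
  · exact ⟨d + 1, _, fun _ => by simpa using htt',
      Or.inl ⟨by push_cast; ring, hp.cons he htl⟩⟩
  · rcases d with _ | e
    · exact ⟨1, _, fun _ => by simpa using htt',
        Or.inl ⟨by simp, FwdPath.cons he (FwdPath.zero (t := tl)) (absurd · (lt_irrefl 0))⟩⟩
    · exact ⟨e, fun k => tl (k + 1),
        fun he0 => htt'.trans ((htl (by omega)).trans (hp.1 0 (by omega))),
        Or.inr ⟨by push_cast; ring, by simpa using hp.tail⟩⟩

lemma cons_bwd {u w : ZMod n} {t t' : ℕ} (he : (s(u, u - 1), t') ∈ A) (htt' : t ≤ t')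
    (h : ArcReach A (u - 1) t' w) : ArcReach A u t w := by
  obtain ⟨d, tl, htl, ⟨rfl, hp⟩ | ⟨rfl, hp⟩⟩ := h
  · rcases d with _ | e
    · exact ⟨1, _, fun _ => by simpa using htt',
        Or.inr ⟨by simp, BwdPath.cons he (BwdPath.zero (t := tl)) (absurd · (lt_irrefl 0))⟩⟩
    · exact ⟨e, fun k => tl (k + 1),
        fun he0 => htt'.trans ((htl (by omega)).trans (hp.1 0 (by omega))),
        Or.inl ⟨by push_cast; ring, by simpa using hp.tail⟩⟩
  · exact ⟨d + 1, _, fun _ => by simpa using htt',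
      Or.inr ⟨by push_cast; ring, hp.cons he htl⟩⟩

end ArcReach

lemma eq_add_one_or_eq_sub_one_of_sym2_eq {u v i : ZMod n} (h : s(u, v) = s(i, i + 1)) :
    v = u + 1 ∨ v = u - 1 := by
  rcases Sym2.eq_iff.mp h with ⟨rfl, rfl⟩ | ⟨rfl, rfl⟩
  · exact Or.inl rfl
  · exact Or.inr (by ring)

lemma TReach.arcReach (hcyc : ∀ q ∈ A, ∃ i : ZMod n, q.1 = s(i, i + 1)) {u v : ZMod n}
    {t : ℕ} (h : TReach A u t v) : ArcReach A u t v := by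
  induction h with
  | refl u t => exact ArcReach.refl u t
  | @step u v w t t' he htt' _ ih =>
    obtain ⟨i, hi⟩ := hcyc _ he
    rcases eq_add_one_or_eq_sub_one_of_sym2_eq hi with rfl | rfl
    · exact ih.cons_fwd he htt'
    · exact ih.cons_bwd he htt'

lemma ZMod.le_of_natCast_eq {a d : ℕ} (ha : a < n) (h : (a : ZMod n) = d) : a ≤ d := by
  have h' := (ZMod.natCast_eq_natCast_iff' a d n).mp h
  rw [Nat.mod_eq_of_lt ha] at h'
  exact h' ▸ Nat.mod_le d n

lemma sector_zero_of_tConnected (hcyc : ∀ q ∈ A, ∃ i : ZMod n, q.1 = s(i, i + 1))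
    (hconn : TConnected A) (i : ZMod n) : Sector A i 0 := by
  classical
  set f := Nat.findGreatest (fun m => ∃ tf, FwdPath A i m tf) (n - 1)
  have hf : ∃ tf, FwdPath A i f tf :=
    Nat.findGreatest_spec (P := fun m => ∃ tf, FwdPath A i m tf) (Nat.zero_le _)
      ⟨fun _ => 0, .zero⟩
  have hmax : ∀ m, f < m → m ≤ n - 1 → ¬∃ tf, FwdPath A i m tf :=
    fun m => Nat.findGreatest_is_greatest
  refine ⟨f, Nat.zero_le _, Nat.findGreatest_le _, hf, ?_⟩
  simp only [Nat.cast_zero, add_zero, zero_add]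
  rcases (Nat.findGreatest_le (n - 1) : f ≤ n - 1).eq_or_lt with hfn | hfn
  · exact ⟨fun _ => 0, by rw [show n - f - 1 = 0 by omega]; exact BwdPath.zero⟩
  obtain ⟨d, tl, -, ⟨hv, hp⟩ | ⟨hv, hp⟩⟩ :=
    (hconn i (i + ((f + 1 : ℕ) : ZMod n))).arcReach hcyc
  · have hd : f + 1 ≤ d := ZMod.le_of_natCast_eq (by omega) (add_left_cancel hv)
    exact absurd ⟨tl, hp.mono hd⟩ (hmax (f + 1) (by omega) (by omega))
  · have hcast : ((n - f - 1 : ℕ) : ZMod n) = d := by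
      rw [Nat.sub_sub, Nat.cast_sub (by omega), ZMod.natCast_self]
      linear_combination -hv
    exact ⟨tl, hp.mono (ZMod.le_of_natCast_eq (by omega) hcast)⟩

/-- Let `𝒢` be a temporal graph whose underlying graph is the cycle
`v_0, …, v_{n-1}, v_0` (temporal edge set `A` supported on cycle edges) and let `A' ⊆ A` be
a temporally connected spanning subgraph.  Then the vertex set can be partitioned into
sectors with respect to `A'`: there are `s ≥ 1` contiguous arcs, the `q`-th starting at
`i₀ + L 0 + ⋯ + L (q-1)` and consisting of `L q ≥ 1` consecutive vertices, with
`L 0 + ⋯ + L (s-1) = n`, each of which is a sector with respect to `A'`. -/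
theorem stmt_11 (n : ℕ) (hn : 3 ≤ n)
    (A : Set (Sym2 (ZMod n) × ℕ))
    (hcyc : ∀ q ∈ A, ∃ i : ZMod n, q.1 = s(i, i + 1))
    (A' : Set (Sym2 (ZMod n) × ℕ)) (hsub : A' ⊆ A)
    (hconn : TConnected A') :
    ∃ (s : ℕ), 0 < s ∧
      ∃ (L : Fin s → ℕ) (i₀ : ZMod n),
        (∀ q, 1 ≤ L q) ∧ (∑ q, L q) = n ∧
        ∀ q : Fin s,
          Sector A'
            (i₀ + ((∑ q' ∈ Finset.univ.filter (fun x => x < q), L q' : ℕ) : ZMod n))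
            (L q - 1) := by
  refine ⟨n, by omega, fun _ => 1, 0, fun _ => le_rfl, by simp, fun _ => ?_⟩
  exact sector_zero_of_tConnected (fun q hq => hcyc q (hsub hq)) hconn _
end

section
/- Let G(V,E) be a connected bipartite graph with parts S = {u_1, …, u_m} (terminals, m ≥ 2) and T = V∖S (non-terminals, T nonempty), so every edge of G joins a vertex of S to a vertex of T, with unit weight on every edge. Construct the unit-weight temporal graph 𝒢 as follows: every edge of G gets the single time label 3; add new vertices p, q, x and a_1, …, a_m, b_1, …, b_m; for every t ∈ T add edges {t,p} with label 4 and {t,q} with label 2; for every i ∈ [m] add edges {p,a_i} with label 1, {a_i,u_i} with label 5, {u_i,b_i} with label 1, and {b_i,q} with label 5; add edges {p,x} with label 1 and {x,q} with label 5. Let k = 2|T| + 4m + 2 be the number of added temporal edges. Then the minimum number of temporal edges in a temporally connected spanning subgraph of 𝒢 equals k + OPT, where OPT is the minimum number of edges of a connected subgraph of G that spans all vertices of S. -/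
/-- The vertices of the temporal graph built in the reduction from unit-weight Steiner Tree:
the terminals `u i` (`i ∈ Fin m`), the non-terminals `t y` (`y : τ`), the special vertices
`p`, `q`, `x`, and the new vertices `a i`, `b i` (`i ∈ Fin m`). -/
inductive RV (m : ℕ) (τ : Type*) where
  | u : Fin m → RV m τ
  | t : τ → RV m τ
  | p : RV m τ
  | q : RV m τ
  | x : RV m τ
  | a : Fin m → RV m τ
  | b : Fin m → RV m τ
  deriving DecidableEq

/-- The temporal edges coming from the edges of the bipartite graph `G` (edge set `E₀`),
each with time label `3`. -/
def gEdges {m : ℕ} {τ : Type*} [DecidableEq τ] (E₀ : Finset (Fin m × τ)) :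
    Finset (Sym2 (RV m τ) × ℕ) :=
  E₀.image (fun e => (s(RV.u e.1, RV.t e.2), 3))

/-- The `k = 2|T| + 4m + 2` auxiliary temporal edges added in the reduction: for each
non-terminal `t`, edges `{t,p}` with label `4` and `{t,q}` with label `2`; for each
`i ∈ Fin m`, edges `{p,a i}` with label `1`, `{a i, u i}` with label `5`, `{u i, b i}` with
label `1`, `{b i, q}` with label `5`; and edges `{p,x}` with label `1`, `{x,q}` with
label `5`. -/
def auxEdges (m : ℕ) (τ : Type*) [DecidableEq τ] [Fintype τ] :
    Finset (Sym2 (RV m τ) × ℕ) :=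
  (Finset.univ : Finset τ).image (fun y => (s(RV.t y, RV.p), 4)) ∪
  (Finset.univ : Finset τ).image (fun y => (s(RV.t y, RV.q), 2)) ∪
  (Finset.univ : Finset (Fin m)).image (fun i => (s(RV.p, RV.a i), 1)) ∪
  (Finset.univ : Finset (Fin m)).image (fun i => (s(RV.a i, RV.u i), 5)) ∪
  (Finset.univ : Finset (Fin m)).image (fun i => (s(RV.u i, RV.b i), 1)) ∪
  (Finset.univ : Finset (Fin m)).image (fun i => (s(RV.b i, RV.q), 5)) ∪
  {(s(RV.p, RV.x), 1), (s(RV.x, RV.q), 5)}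

/-- The full set of temporal edges of the temporal graph `𝒢` of the reduction. -/
def tempEdges {m : ℕ} {τ : Type*} [DecidableEq τ] [Fintype τ]
    (E : Finset (Fin m × τ)) : Finset (Sym2 (RV m τ) × ℕ) :=
  gEdges E ∪ auxEdges m τ

/-- The (bipartite, unit-weight) graph on `Fin m ⊕ τ` determined by an edge set
`E₀ ⊆ Fin m × τ`. -/
def SteinerGraph {m : ℕ} {τ : Type*} (E₀ : Finset (Fin m × τ)) :
    SimpleGraph (Fin m ⊕ τ) :=
  SimpleGraph.fromEdgeSet {e | ∃ ed ∈ E₀, e = s(Sum.inl ed.1, Sum.inr ed.2)}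

/-- The vertices of the subgraph determined by `E₀`: all terminals, together with the
non-terminal endpoints of edges of `E₀`. -/
def InSub {m : ℕ} {τ : Type*} (E₀ : Finset (Fin m × τ)) (v : Fin m ⊕ τ) : Prop :=
  (∃ i : Fin m, v = Sum.inl i) ∨ (∃ ed ∈ E₀, v = Sum.inr ed.2)

/-- `E₀ ⊆ E` is a feasible Steiner solution: the subgraph of `G` with edge set `E₀`,
together with all terminals, is connected (hence it is a connected subgraph of `G`
containing every vertex of `S`). -/
def SteinerFeasible {m : ℕ} {τ : Type*} (E E₀ : Finset (Fin m × τ)) : Prop :=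
  E₀ ⊆ E ∧
  ∀ v w : Fin m ⊕ τ, InSub E₀ v → InSub E₀ w → (SteinerGraph E₀).Reachable v w

/-!
Upper bound: keep the label-3 copies of the edges of an optimal Steiner solution `E₀` together
with all added edges. Starting at time 0, every vertex reaches one of the hubs `p` (by time 1),
`u i` (by time 1) or `q` (by time 2). From `p` the edges to `a j`, `x` (label 1) and `t y`
(label 4) lead everywhere; from `u i` the other terminals are reached along `E₀` at time 3,
everything else through a neighbour `t y` of `u i` in `E₀` (then `p` at time 4) or through `b i`
(then `q` at time 5); from `q` the label-2 edges lead into `G` before time 3.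

Lower bound: every added edge is forced. For each one there are two vertices such that, once
that edge is removed, the (vertex, time) states reachable from the first stay inside a set that
misses the second. Likewise, every terminal visited by a temporal path from `u i` is joined to
`u i` by label-3 edges of the path: off `G` the path reaches `p` and the `t y` only at time
≥ 4 and `q` only at time 5, so a new terminal `u j` cannot be entered from `t y` (label 3), from
`b j` (label 1) or from `a j` (entered only from `p` at label 1 or from `u j`). So the label-3
edges of a temporally connected subgraph form a Steiner solution.
-/

namespace TReach

variable {V : Type*} {A A' : Set (Sym2 V × ℕ)} {u v w : V} {t t' : ℕ}

theorem mono_time (h : TReach A u t v) (ht : t' ≤ t) : TReach A u t' v := by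
  induction h with
  | refl u t => exact .refl u t'
  | step hmem hle _ _ => exact .step hmem (ht.trans hle) ‹_›

theorem mono_set (hA : A ⊆ A') (h : TReach A u t v) : TReach A' u t v := by
  induction h with
  | refl u t => exact .refl u t
  | step hmem hle _ ih => exact .step (hA hmem) hle ih

theorem step_swap (h : (s(v, u), t') ∈ A) (hle : t ≤ t') (tail : TReach A v t' w) :
    TReach A u t w :=
  .step (Sym2.eq_swap ▸ h) hle tail

theorem exists_of_invariant (J : V → ℕ → Prop)
    (hJ : ∀ ⦃u v t t'⦄, J u t → (s(u, v), t') ∈ A → t ≤ t' → J v t')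
    (h : TReach A u t w) (hu : J u t) : ∃ t', J w t' := by
  induction h with
  | refl u t => exact ⟨t, hu⟩
  | step hmem hle _ ih => exact ih (hJ hu hmem hle)

theorem not_of_invariant (J : V → ℕ → Prop)
    (hJ : ∀ ⦃u v t t'⦄, J u t → (s(u, v), t') ∈ A → t ≤ t' → J v t')
    (hu : J u t) (hw : ∀ t', ¬ J w t') : ¬ TReach A u t w :=
  fun h ↦ (h.exists_of_invariant J hJ hu).elim hw

theorem mem_of_not_treach_erase [DecidableEq V] {B C : Finset (Sym2 V × ℕ)} {e : Sym2 V × ℕ}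
    (hBC : B ⊆ C) (h : TReach (↑B : Set _) u t v) (hC : ¬ TReach (↑(C.erase e) : Set _) u t v) :
    e ∈ B := by
  by_contra he
  exact hC (h.mono_set fun f hf ↦ Finset.mem_erase.2 ⟨fun hfe ↦ he (hfe ▸ hf), hBC hf⟩)

end TReach

section SteinerGraph

variable {m : ℕ} {τ : Type*} {E₀ : Finset (Fin m × τ)}

lemma steinerGraph_adj {ed : Fin m × τ} (hed : ed ∈ E₀) :
    (SteinerGraph E₀).Adj (.inl ed.1) (.inr ed.2) := by
  rw [SteinerGraph, SimpleGraph.fromEdgeSet_adj]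
  exact ⟨⟨ed, hed, rfl⟩, by simp⟩

lemma exists_mem_of_reachable_inl {i j : Fin m} (hij : i ≠ j)
    (h : (SteinerGraph E₀).Reachable (.inl i) (.inl j)) : ∃ y, (i, y) ∈ E₀ := by
  obtain ⟨_ | ⟨hadj, -⟩⟩ := h
  · exact absurd rfl hij
  rw [SteinerGraph, SimpleGraph.fromEdgeSet_adj] at hadj
  obtain ⟨⟨ed, hed, he⟩, -⟩ := hadj
  rcases Sym2.eq_iff.1 he with ⟨h₁, rfl⟩ | ⟨h₁, -⟩
  · exact ⟨ed.2, Sum.inl_injective h₁ ▸ hed⟩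
  · exact absurd h₁ Sum.inl_ne_inr

lemma treach_of_reachable {A : Set (Sym2 (RV m τ) × ℕ)}
    (hG : ∀ ed ∈ E₀, (s(RV.u ed.1, RV.t ed.2), 3) ∈ A)
    {v w : Fin m ⊕ τ} (h : (SteinerGraph E₀).Reachable v w) {z : RV m τ}
    (tail : TReach A (Sum.elim RV.u RV.t w) 3 z) : TReach A (Sum.elim RV.u RV.t v) 3 z := by
  obtain ⟨p⟩ := h
  induction p with
  | nil => exact tail
  | cons hadj _ ih =>
    rw [SteinerGraph, SimpleGraph.fromEdgeSet_adj] at hadj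
    obtain ⟨⟨ed, hed, he⟩, -⟩ := hadj
    rcases Sym2.eq_iff.1 he with ⟨rfl, rfl⟩ | ⟨rfl, rfl⟩
    · exact .step (hG ed hed) le_rfl (ih tail)
    · exact .step_swap (hG ed hed) le_rfl (ih tail)

lemma steinerFeasible_of_reachable {E : Finset (Fin m × τ)} (hsub : E₀ ⊆ E)
    (hconn : ∀ i j : Fin m, (SteinerGraph E₀).Reachable (.inl i) (.inl j)) :
    SteinerFeasible E E₀ := by
  have hterm : ∀ v, InSub E₀ v → ∃ i, (SteinerGraph E₀).Reachable (.inl i) v := by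
    rintro v (⟨i, rfl⟩ | ⟨ed, hed, rfl⟩)
    · exact ⟨i, .refl _⟩
    · exact ⟨ed.1, (steinerGraph_adj hed).reachable⟩
  refine ⟨hsub, fun v w hv hw ↦ ?_⟩
  obtain ⟨i, hi⟩ := hterm v hv
  obtain ⟨j, hj⟩ := hterm w hw
  exact hi.symm.trans ((hconn i j).trans hj)

end SteinerGraph

section Reduction

variable {m : ℕ} {τ : Type*} [DecidableEq τ]

lemma card_gEdges (E₀ : Finset (Fin m × τ)) : (gEdges E₀).card = E₀.card :=
  Finset.card_image_of_injective _ fun a b h ↦ by simpa [Sym2.eq_iff, Prod.ext_iff] using h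

variable [Fintype τ] {E : Finset (Fin m × τ)} {B : Finset (Sym2 (RV m τ) × ℕ)}
  {A : Set (Sym2 (RV m τ) × ℕ)}

lemma mem_tempEdges {e : Sym2 (RV m τ) × ℕ} :
    e ∈ tempEdges E ↔
    (∃ ed ∈ E, e = (s(RV.u ed.1, RV.t ed.2), 3)) ∨
    (∃ y : τ, e = (s(RV.t y, RV.p), 4)) ∨ (∃ y : τ, e = (s(RV.t y, RV.q), 2)) ∨
    (∃ i : Fin m, e = (s(RV.p, RV.a i), 1)) ∨ (∃ i : Fin m, e = (s(RV.a i, RV.u i), 5)) ∨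
    (∃ i : Fin m, e = (s(RV.u i, RV.b i), 1)) ∨ (∃ i : Fin m, e = (s(RV.b i, RV.q), 5)) ∨
    e = (s(RV.p, RV.x), 1) ∨ e = (s(RV.x, RV.q), 5) := by
  simp only [tempEdges, gEdges, auxEdges, Finset.mem_union, Finset.mem_image,
    Finset.mem_insert, Finset.mem_singleton, Finset.mem_univ, true_and, eq_comm, or_assoc]

lemma not_treach_erase_pa (i : Fin m) :
    ¬ TReach (↑((tempEdges E).erase (s(RV.p, RV.a i), 1)) : Set (Sym2 (RV m τ) × ℕ))
      RV.x 0 (RV.a i) := by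
  refine TReach.not_of_invariant
    (fun v t => match v with
      | .x | .p => True
      | .t _ => 4 ≤ t
      | .q | .b _ => 5 ≤ t
      | .a j => j ≠ i ∧ 1 ≤ t
      | .u j => j ≠ i ∧ 5 ≤ t) ?_ trivial fun _ hi ↦ hi.1 rfl
  intro u v t t' hJ he hle
  obtain ⟨hne, he⟩ := Finset.mem_erase.1 he
  rcases mem_tempEdges.1 he with
    ⟨_, -, he⟩ | ⟨_, he⟩ | ⟨_, he⟩ | ⟨_, he⟩ | ⟨_, he⟩ | ⟨_, he⟩ | ⟨_, he⟩ | he | he <;>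
    rw [Prod.mk.injEq, Sym2.eq_iff] at he <;>
    rcases he with ⟨⟨rfl, rfl⟩ | ⟨rfl, rfl⟩, rfl⟩ <;>
    simp_all <;> omega

lemma not_treach_erase_au (i : Fin m) :
    ¬ TReach (↑((tempEdges E).erase (s(RV.a i, RV.u i), 5)) : Set (Sym2 (RV m τ) × ℕ))
      RV.x 0 (RV.u i) := by
  refine TReach.not_of_invariant
    (fun v t => match v with
      | .x | .p => True
      | .t _ => 4 ≤ t
      | .q | .b _ => 5 ≤ t
      | .a _ => 1 ≤ t
      | .u j => j ≠ i ∧ 5 ≤ t) ?_ trivial fun _ hi ↦ hi.1 rfl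
  intro u v t t' hJ he hle
  obtain ⟨hne, he⟩ := Finset.mem_erase.1 he
  rcases mem_tempEdges.1 he with
    ⟨_, -, he⟩ | ⟨_, he⟩ | ⟨_, he⟩ | ⟨_, he⟩ | ⟨_, he⟩ | ⟨_, he⟩ | ⟨_, he⟩ | he | he <;>
    rw [Prod.mk.injEq, Sym2.eq_iff] at he <;>
    rcases he with ⟨⟨rfl, rfl⟩ | ⟨rfl, rfl⟩, rfl⟩ <;>
    simp_all <;> omega

lemma not_treach_erase_ub (i : Fin m) :
    ¬ TReach (↑((tempEdges E).erase (s(RV.u i, RV.b i), 1)) : Set (Sym2 (RV m τ) × ℕ))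
      (RV.u i) 0 RV.q := by
  refine TReach.not_of_invariant
    (fun v t => match v with
      | .x | .q | .b _ => False
      | .p => 4 ≤ t
      | .t _ => 3 ≤ t
      | .a _ => 5 ≤ t
      | .u j => j = i ∨ 3 ≤ t) ?_ (.inl rfl) fun _ ↦ id
  intro u v t t' hJ he hle
  obtain ⟨hne, he⟩ := Finset.mem_erase.1 he
  rcases mem_tempEdges.1 he with
    ⟨_, -, he⟩ | ⟨_, he⟩ | ⟨_, he⟩ | ⟨_, he⟩ | ⟨_, he⟩ | ⟨_, he⟩ | ⟨_, he⟩ | he | he <;>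
    rw [Prod.mk.injEq, Sym2.eq_iff] at he <;>
    rcases he with ⟨⟨rfl, rfl⟩ | ⟨rfl, rfl⟩, rfl⟩ <;>
    simp_all <;> omega

lemma not_treach_erase_bq (i : Fin m) :
    ¬ TReach (↑((tempEdges E).erase (s(RV.b i, RV.q), 5)) : Set (Sym2 (RV m τ) × ℕ))
      (RV.u i) 0 RV.q := by
  refine TReach.not_of_invariant
    (fun v t => match v with
      | .x | .q => False
      | .p => 4 ≤ t
      | .t _ => 3 ≤ t
      | .a _ => 5 ≤ t
      | .b j => j = i ∧ 1 ≤ t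
      | .u j => j = i ∨ 3 ≤ t) ?_ (.inl rfl) fun _ ↦ id
  intro u v t t' hJ he hle
  obtain ⟨hne, he⟩ := Finset.mem_erase.1 he
  rcases mem_tempEdges.1 he with
    ⟨_, -, he⟩ | ⟨_, he⟩ | ⟨_, he⟩ | ⟨_, he⟩ | ⟨_, he⟩ | ⟨_, he⟩ | ⟨_, he⟩ | he | he <;>
    rw [Prod.mk.injEq, Sym2.eq_iff] at he <;>
    rcases he with ⟨⟨rfl, rfl⟩ | ⟨rfl, rfl⟩, rfl⟩ <;>
    simp_all <;> omega

lemma not_treach_erase_tq (y : τ) :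
    ¬ TReach (↑((tempEdges E).erase (s(RV.t y, RV.q), 2)) : Set (Sym2 (RV m τ) × ℕ))
      (RV.t y) 0 RV.q := by
  refine TReach.not_of_invariant
    (fun v t => match v with
      | .x | .q | .b _ => False
      | .p => 4 ≤ t
      | .t z => z = y ∨ 3 ≤ t
      | .a _ => 5 ≤ t
      | .u _ => 3 ≤ t) ?_ (.inl rfl) fun _ ↦ id
  intro u v t t' hJ he hle
  obtain ⟨hne, he⟩ := Finset.mem_erase.1 he
  rcases mem_tempEdges.1 he with
    ⟨_, -, he⟩ | ⟨_, he⟩ | ⟨_, he⟩ | ⟨_, he⟩ | ⟨_, he⟩ | ⟨_, he⟩ | ⟨_, he⟩ | he | he <;>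
    rw [Prod.mk.injEq, Sym2.eq_iff] at he <;>
    rcases he with ⟨⟨rfl, rfl⟩ | ⟨rfl, rfl⟩, rfl⟩ <;>
    simp_all <;> omega

lemma not_treach_erase_tp (y : τ) :
    ¬ TReach (↑((tempEdges E).erase (s(RV.t y, RV.p), 4)) : Set (Sym2 (RV m τ) × ℕ))
      RV.x 0 (RV.t y) := by
  refine TReach.not_of_invariant
    (fun v t => match v with
      | .x | .p | .a _ => True
      | .t z => z ≠ y ∧ 4 ≤ t
      | .q | .b _ | .u _ => 5 ≤ t) ?_ trivial fun _ hi ↦ hi.1 rfl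
  intro u v t t' hJ he hle
  obtain ⟨hne, he⟩ := Finset.mem_erase.1 he
  rcases mem_tempEdges.1 he with
    ⟨_, -, he⟩ | ⟨_, he⟩ | ⟨_, he⟩ | ⟨_, he⟩ | ⟨_, he⟩ | ⟨_, he⟩ | ⟨_, he⟩ | he | he <;>
    rw [Prod.mk.injEq, Sym2.eq_iff] at he <;>
    rcases he with ⟨⟨rfl, rfl⟩ | ⟨rfl, rfl⟩, rfl⟩ <;>
    simp_all <;> omega

lemma not_treach_erase_px :
    ¬ TReach (↑((tempEdges E).erase (s(RV.p, RV.x), 1)) : Set (Sym2 (RV m τ) × ℕ))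
      RV.p 0 RV.x := by
  refine TReach.not_of_invariant
    (fun v t => match v with
      | .x | .q | .b _ => False
      | .p | .a _ => True
      | .t _ => 4 ≤ t
      | .u _ => 5 ≤ t) ?_ trivial fun _ ↦ id
  intro u v t t' hJ he hle
  obtain ⟨hne, he⟩ := Finset.mem_erase.1 he
  rcases mem_tempEdges.1 he with
    ⟨_, -, he⟩ | ⟨_, he⟩ | ⟨_, he⟩ | ⟨_, he⟩ | ⟨_, he⟩ | ⟨_, he⟩ | ⟨_, he⟩ | he | he <;>
    rw [Prod.mk.injEq, Sym2.eq_iff] at he <;>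
    rcases he with ⟨⟨rfl, rfl⟩ | ⟨rfl, rfl⟩, rfl⟩ <;>
    simp_all <;> omega

lemma not_treach_erase_xq :
    ¬ TReach (↑((tempEdges E).erase (s(RV.x, RV.q), 5)) : Set (Sym2 (RV m τ) × ℕ))
      RV.x 0 RV.q := by
  refine TReach.not_of_invariant
    (fun v t => match v with
      | .q | .b _ => False
      | .x | .p | .a _ => True
      | .t _ => 4 ≤ t
      | .u _ => 5 ≤ t) ?_ trivial fun _ ↦ id
  intro u v t t' hJ he hle
  obtain ⟨hne, he⟩ := Finset.mem_erase.1 he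
  rcases mem_tempEdges.1 he with
    ⟨_, -, he⟩ | ⟨_, he⟩ | ⟨_, he⟩ | ⟨_, he⟩ | ⟨_, he⟩ | ⟨_, he⟩ | ⟨_, he⟩ | he | he <;>
    rw [Prod.mk.injEq, Sym2.eq_iff] at he <;>
    rcases he with ⟨⟨rfl, rfl⟩ | ⟨rfl, rfl⟩, rfl⟩ <;>
    simp_all <;> omega

lemma card_auxEdges : (auxEdges m τ).card = 2 * Fintype.card τ + 4 * m + 2 := by
  rw [auxEdges]
  repeat rw [Finset.card_union_of_disjoint (Finset.disjoint_right.2 (by simp))]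
  repeat rw [Finset.card_image_of_injective _ (fun a b h ↦ by simpa [Sym2.eq_iff] using h)]
  rw [Finset.card_pair (by simp)]
  simp only [Finset.card_univ, Fintype.card_fin]
  ring

lemma disjoint_gEdges_auxEdges (E₀ : Finset (Fin m × τ)) :
    Disjoint (gEdges E₀) (auxEdges m τ) := by
  rw [Finset.disjoint_left]
  intro e he
  obtain ⟨ed, -, rfl⟩ := Finset.mem_image.1 he
  simp [auxEdges]

lemma auxEdges_subset_of_tConnected (hB : B ⊆ tempEdges E)
    (hconn : TConnected (↑B : Set (Sym2 (RV m τ) × ℕ))) : auxEdges m τ ⊆ B := by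
  intro e he
  simp only [auxEdges, Finset.mem_union, Finset.mem_image, Finset.mem_univ, true_and,
    Finset.mem_insert, Finset.mem_singleton, or_assoc] at he
  rcases he with ⟨y, rfl⟩ | ⟨y, rfl⟩ | ⟨i, rfl⟩ | ⟨i, rfl⟩ | ⟨i, rfl⟩ | ⟨i, rfl⟩ | rfl | rfl
  · exact TReach.mem_of_not_treach_erase hB (hconn _ _) (not_treach_erase_tp y)
  · exact TReach.mem_of_not_treach_erase hB (hconn _ _) (not_treach_erase_tq y)
  · exact TReach.mem_of_not_treach_erase hB (hconn _ _) (not_treach_erase_pa i)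
  · exact TReach.mem_of_not_treach_erase hB (hconn _ _) (not_treach_erase_au i)
  · exact TReach.mem_of_not_treach_erase hB (hconn _ _) (not_treach_erase_ub i)
  · exact TReach.mem_of_not_treach_erase hB (hconn _ _) (not_treach_erase_bq i)
  · exact TReach.mem_of_not_treach_erase hB (hconn _ _) not_treach_erase_px
  · exact TReach.mem_of_not_treach_erase hB (hconn _ _) not_treach_erase_xq

lemma reachable_of_treach (hB : B ⊆ tempEdges E) {i j : Fin m}
    (h : TReach (↑B : Set (Sym2 (RV m τ) × ℕ)) (RV.u i) 0 (RV.u j)) :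
    (SteinerGraph (E.filter fun ed ↦ (s(RV.u ed.1, RV.t ed.2), 3) ∈ B)).Reachable
      (.inl i) (.inl j) := by
  set G := SteinerGraph (E.filter fun ed ↦ (s(RV.u ed.1, RV.t ed.2), 3) ∈ B)
  have key := h.exists_of_invariant
    (fun v t => match v with
      | .u l => G.Reachable (.inl i) (.inl l)
      | .t y => G.Reachable (.inl i) (.inr y) ∧ 3 ≤ t ∨ 4 ≤ t
      | .a l => G.Reachable (.inl i) (.inl l) ∧ 5 ≤ t
      | .b l => G.Reachable (.inl i) (.inl l) ∧ 1 ≤ t ∨ 5 ≤ t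
      | .p => 4 ≤ t
      | .q | .x => 5 ≤ t) ?_ (.refl _)
  · exact key.elim fun _ ↦ id
  have hG : ∀ ed ∈ E, (s(RV.u ed.1, RV.t ed.2), 3) ∈ B → G.Adj (.inl ed.1) (.inr ed.2) :=
    fun ed hed he ↦ steinerGraph_adj (Finset.mem_filter.2 ⟨hed, he⟩)
  intro u v t t' hJ he hle
  rcases mem_tempEdges.1 (hB he) with
    ⟨ed, hed, he'⟩ | ⟨_, he'⟩ | ⟨_, he'⟩ | ⟨_, he'⟩ | ⟨_, he'⟩ | ⟨_, he'⟩ | ⟨_, he'⟩ | he' | he' <;>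
    rw [Prod.mk.injEq, Sym2.eq_iff] at he' <;>
    rcases he' with ⟨⟨rfl, rfl⟩ | ⟨rfl, rfl⟩, rfl⟩
  · exact .inl ⟨hJ.trans (hG ed hed he).reachable, le_rfl⟩
  · rw [Finset.mem_coe, Sym2.eq_swap] at he
    rcases hJ with ⟨hr, -⟩ | h4
    · exact hr.trans (hG ed hed he).symm.reachable
    · omega
  all_goals simp_all <;> grind

lemma exists_steinerFeasible_add_card_le (hB : B ⊆ tempEdges E)
    (hconn : TConnected (↑B : Set (Sym2 (RV m τ) × ℕ))) :
    ∃ E₀, SteinerFeasible E E₀ ∧ (2 * Fintype.card τ + 4 * m + 2) + E₀.card ≤ B.card := by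
  set E₀ := E.filter fun ed ↦ (s(RV.u ed.1, RV.t ed.2), 3) ∈ B
  refine ⟨E₀, steinerFeasible_of_reachable (Finset.filter_subset _ _)
    fun i j ↦ reachable_of_treach hB (hconn _ _), ?_⟩
  have hG : gEdges E₀ ⊆ B := by
    intro e he
    obtain ⟨ed, hed, rfl⟩ := Finset.mem_image.1 he
    exact (Finset.mem_filter.1 hed).2
  rw [← card_gEdges E₀, ← card_auxEdges,
    ← Finset.card_union_of_disjoint (disjoint_gEdges_auxEdges E₀).symm]
  exact Finset.card_le_card (Finset.union_subset (auxEdges_subset_of_tConnected hB hconn) hG)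

lemma treach_from_p (hA : ↑(auxEdges m τ) ⊆ A) : ∀ z, TReach A .p 1 z
  | .p => .refl _ _
  | .a j => .step (v := .a j) (hA (by simp [auxEdges])) le_rfl (.refl _ _)
  | .x => .step (v := .x) (hA (by simp [auxEdges])) le_rfl (.refl _ _)
  | .t y => .step (v := .t y) (hA (by simp [auxEdges])) (by norm_num) (.refl _ 4)
  | .u j => .step (v := .a j) (hA (by simp [auxEdges])) le_rfl <|
      .step (v := .u j) (hA (by simp [auxEdges])) (by norm_num) (.refl _ 5)
  | .q => .step (v := .x) (hA (by simp [auxEdges])) le_rfl <|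
      .step (v := .q) (hA (by simp [auxEdges])) (by norm_num) (.refl _ 5)
  | .b j => .step (v := .x) (hA (by simp [auxEdges])) le_rfl <|
      .step (v := .q) (hA (by simp [auxEdges])) (by norm_num) <|
      .step (v := .b j) (hA (by simp [auxEdges])) le_rfl (.refl _ 5)

lemma treach_from_u (hA : ↑(auxEdges m τ) ⊆ A) {E₀ : Finset (Fin m × τ)}
    (hG : ∀ ed ∈ E₀, (s(RV.u ed.1, RV.t ed.2), 3) ∈ A)
    (hconn : ∀ i j : Fin m, (SteinerGraph E₀).Reachable (.inl i) (.inl j))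
    (hdeg : ∀ i, ∃ y, (i, y) ∈ E₀) (i : Fin m) (z : RV m τ) : TReach A (.u i) 1 z := by
  obtain ⟨y', hy'⟩ := hdeg i
  cases z with
  | u j => exact .mono_time (treach_of_reachable hG (hconn i j) (.refl _ 3)) (by norm_num)
  | a j => exact .mono_time (treach_of_reachable hG (hconn i j) <|
      .step (v := .a j) (hA (by simp [auxEdges])) (by norm_num) (.refl _ 5)) (by norm_num)
  | p => exact .step (v := .t y') (hG _ hy') (by norm_num) <|
      .step (v := .p) (hA (by simp [auxEdges])) (by norm_num) (.refl _ 4)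
  | t y => exact .step (v := .t y') (hG _ hy') (by norm_num) <|
      .step (v := .p) (hA (by simp [auxEdges])) (by norm_num) <|
      .step (v := .t y) (hA (by simp [auxEdges])) le_rfl (.refl _ 4)
  | q => exact .step (v := .b i) (hA (by simp [auxEdges])) le_rfl <|
      .step (v := .q) (hA (by simp [auxEdges])) (by norm_num) (.refl _ 5)
  | b j => exact .step (v := .b i) (hA (by simp [auxEdges])) le_rfl <|
      .step (v := .q) (hA (by simp [auxEdges])) (by norm_num) <|
      .step (v := .b j) (hA (by simp [auxEdges])) le_rfl (.refl _ 5)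
  | x => exact .step (v := .b i) (hA (by simp [auxEdges])) le_rfl <|
      .step (v := .q) (hA (by simp [auxEdges])) (by norm_num) <|
      .step (v := .x) (hA (by simp [auxEdges])) le_rfl (.refl _ 5)

lemma treach_from_q [Nonempty τ] (hA : ↑(auxEdges m τ) ⊆ A) {E₀ : Finset (Fin m × τ)}
    (hG : ∀ ed ∈ E₀, (s(RV.u ed.1, RV.t ed.2), 3) ∈ A)
    (hdeg : ∀ i, ∃ y, (i, y) ∈ E₀) (z : RV m τ) : TReach A .q 2 z := by
  cases z with
  | q => exact .refl _ _
  | t y => exact .step (v := .t y) (hA (by simp [auxEdges])) le_rfl (.refl _ 2)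
  | p =>
    obtain ⟨y⟩ := ‹Nonempty τ›
    exact .step (v := .t y) (hA (by simp [auxEdges])) le_rfl <|
      .step (v := .p) (hA (by simp [auxEdges])) (by norm_num) (.refl _ 4)
  | u j =>
    obtain ⟨y, hy⟩ := hdeg j
    exact .step (v := .t y) (hA (by simp [auxEdges])) le_rfl <|
      .step_swap (hG _ hy) (by norm_num) (.refl _ 3)
  | a j =>
    obtain ⟨y, hy⟩ := hdeg j
    exact .step (v := .t y) (hA (by simp [auxEdges])) le_rfl <|
      .step_swap (hG _ hy) (by norm_num) <|
      .step (v := .a j) (hA (by simp [auxEdges])) (by norm_num) (.refl _ 5)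
  | b j => exact .step (v := .b j) (hA (by simp [auxEdges])) (by norm_num) (.refl _ 5)
  | x => exact .step (v := .x) (hA (by simp [auxEdges])) (by norm_num) (.refl _ 5)

lemma tConnected_gEdges_union_auxEdges (hm : 2 ≤ m) {E₀ : Finset (Fin m × τ)}
    (hconn : ∀ i j : Fin m, (SteinerGraph E₀).Reachable (.inl i) (.inl j)) :
    TConnected (↑(gEdges E₀ ∪ auxEdges m τ) : Set (Sym2 (RV m τ) × ℕ)) := by
  have hA : ↑(auxEdges m τ) ⊆ (↑(gEdges E₀ ∪ auxEdges m τ) : Set (Sym2 (RV m τ) × ℕ)) :=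
    Finset.coe_subset.2 Finset.subset_union_right
  have hG : ∀ ed ∈ E₀, (s(RV.u ed.1, RV.t ed.2), 3) ∈ (↑(gEdges E₀ ∪ auxEdges m τ) : Set _) :=
    fun ed hed ↦ Finset.mem_union_left _ (Finset.mem_image_of_mem _ hed)
  have : Nontrivial (Fin m) := Fin.nontrivial_iff_two_le.2 hm
  have hdeg : ∀ i, ∃ y, (i, y) ∈ E₀ := fun i ↦
    have ⟨j, hj⟩ := exists_ne i
    exists_mem_of_reachable_inl hj.symm (hconn i j)
  have : Nonempty τ := ⟨(hdeg ⟨0, by omega⟩).choose⟩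
  intro v w
  cases v with
  | p => exact (treach_from_p hA w).mono_time (Nat.zero_le _)
  | u i => exact (treach_from_u hA hG hconn hdeg i w).mono_time (Nat.zero_le _)
  | q => exact (treach_from_q hA hG hdeg w).mono_time (Nat.zero_le _)
  | t y => exact .step (v := .q) (hA (by simp [auxEdges])) (Nat.zero_le _) <|
      treach_from_q hA hG hdeg w
  | x => exact .step (v := .p) (hA (by simp [auxEdges])) (Nat.zero_le _) (treach_from_p hA w)
  | a i => exact .step (v := .p) (hA (by simp [auxEdges])) (Nat.zero_le _) (treach_from_p hA w)
  | b i => exact .step (v := .u i) (t' := 1) (hA (by simp [auxEdges])) (Nat.zero_le _) <|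
      treach_from_u hA hG hconn hdeg i w

end Reduction

theorem stmt_14_general (m : ℕ) (hm : 2 ≤ m) (τ : Type*)
    [DecidableEq τ] [Fintype τ]
    (E : Finset (Fin m × τ))
    (hGconn : (SteinerGraph E).Connected) :
    sInf {c : ℕ | ∃ B ⊆ tempEdges E,
        TConnected (↑B : Set (Sym2 (RV m τ) × ℕ)) ∧ B.card = c}
      = (2 * Fintype.card τ + 4 * m + 2) +
        sInf {c : ℕ | ∃ E₀ : Finset (Fin m × τ), SteinerFeasible E E₀ ∧ E₀.card = c} := by
  obtain ⟨E₀, hE₀, hcard⟩ :=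
    Nat.sInf_mem (s := {c : ℕ | ∃ E₀ : Finset (Fin m × τ), SteinerFeasible E E₀ ∧ E₀.card = c})
      ⟨_, E, ⟨subset_rfl, fun v w _ _ ↦ hGconn.preconnected v w⟩, rfl⟩
  refine le_antisymm (Nat.sInf_le ?opt) (le_csInf ⟨_, ?opt⟩ ?_)
  case opt =>
    refine ⟨gEdges E₀ ∪ auxEdges m τ,
      Finset.union_subset ((Finset.image_subset_image hE₀.1).trans Finset.subset_union_left)
        Finset.subset_union_right,
      tConnected_gEdges_union_auxEdges hm fun i j ↦ hE₀.2 _ _ (.inl ⟨i, rfl⟩) (.inl ⟨j, rfl⟩), ?_⟩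
    rw [Finset.card_union_of_disjoint (disjoint_gEdges_auxEdges E₀), card_gEdges, card_auxEdges,
      hcard, add_comm]
  rintro _ ⟨B, hB, hconn, rfl⟩
  obtain ⟨E₁, hE₁, hle⟩ := exists_steinerFeasible_add_card_le hB hconn
  exact le_trans (by gcongr; exact Nat.sInf_le ⟨E₁, hE₁, rfl⟩) hle

/-- Let `G` be a connected bipartite graph with terminal part
`S = Fin m` (`m ≥ 2`) and nonempty non-terminal part `τ`, with edge set `E ⊆ Fin m × τ` and
unit weights, and let `𝒢` be the unit-weight temporal graph `tempEdges E` of the reduction,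
with `k = 2|τ| + 4m + 2` added temporal edges.  Then the minimum number of temporal edges of
a temporally connected spanning subgraph of `𝒢` equals `k + OPT`, where `OPT` is the minimum
number of edges of a connected subgraph of `G` spanning all terminals. -/
theorem stmt_14 (m : ℕ) (hm : 2 ≤ m) (τ : Type*)
    [DecidableEq τ] [Fintype τ] [Nonempty τ]
    (E : Finset (Fin m × τ))
    (hGconn : (SteinerGraph E).Connected) :
    sInf {c : ℕ | ∃ B ⊆ tempEdges E,
        TConnected (↑B : Set (Sym2 (RV m τ) × ℕ)) ∧ B.card = c}
      = (2 * Fintype.card τ + 4 * m + 2) +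
        sInf {c : ℕ | ∃ E₀ : Finset (Fin m × τ), SteinerFeasible E E₀ ∧ E₀.card = c} :=
  stmt_14_general m hm τ E hGconn
end
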